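/- arXiv:1212.4800 — 5 statements merged into one kernel-verified Lean document; each statement's English description precedes it below -/
import Mathlib

section
/- Let k ≥ 3, s ≥ 2k, and let η > 0. Then there exists a constant c = c(k, s, η) > 0 such that for all A ≥ 1, the number of coefficient vectors a with 0 < |a_j| ≤ A for all j for which the equation a_1x_1^k + ⋯ + a_sx_s^k = 0 admits an integral solution x ∈ ℤ^s with 0 < max_j |x_j| ≤ c·|a|^(1/(s−k)) does not exceed η·A^s. -/
open MeasureTheory

/-- `e(α) = exp(2πiα)`. -/
noncomputable def eC (α : ℝ) : ℂ := Complex.exp (2 * Real.pi * Complex.I * α)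

/-- `v(β, B) = ∫_{-B}^{B} e(β ξ^k) dξ`. -/
noncomputable def vInt (k : ℕ) (β B : ℝ) : ℂ := ∫ ξ in (-B)..B, eC (β * ξ ^ k)

/-- The singular integral `J_a = ∫_{-∞}^{∞} v(a_1 β,1) ⋯ v(a_s β,1) dβ` (a real number). -/
noncomputable def Ja (k s : ℕ) (a : Fin s → ℤ) : ℝ :=
  (∫ β : ℝ, ∏ j, vInt k ((a j : ℝ) * β) 1).re

/-- The Gauss sum `S(q, m) = ∑_{x=1}^{q} e(m x^k / q)`. -/
noncomputable def Sq (k q : ℕ) (m : ℤ) : ℂ :=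
  ∑ x ∈ Finset.Icc 1 q, eC ((m : ℝ) * (x : ℝ) ^ k / q)

/-- `T_a(q) = q^{-s} ∑_{r=1, (r,q)=1}^{q} S(q, a_1 r) ⋯ S(q, a_s r)`. -/
noncomputable def Tq (k s : ℕ) (a : Fin s → ℤ) (q : ℕ) : ℂ :=
  ((q : ℂ) ^ s)⁻¹ * ∑ r ∈ (Finset.Icc 1 q).filter (fun r => Nat.gcd r q = 1),
    ∏ j, Sq k q (a j * r)

/-- The singular series `𝔖_a = ∑_{q=1}^∞ T_a(q)` (a real number; the `q = 0` term vanishes). -/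
noncomputable def SS (k s : ℕ) (a : Fin s → ℤ) : ℝ := (∑' q : ℕ, Tq k s a q).re

/-- `ρ_a(B)`: the number of `x ∈ ℤ^s` with `1 ≤ |x_j| ≤ B` and `a_1 x_1^k + ⋯ + a_s x_s^k = 0`. -/
noncomputable def rho (k s : ℕ) (a : Fin s → ℤ) (B : ℝ) : ℕ :=
  Set.ncard {x : Fin s → ℤ | (∀ j, x j ≠ 0 ∧ (|x j| : ℝ) ≤ B) ∧ ∑ j, a j * x j ^ k = 0}

/-- `|a| = max_j |a_j|`. -/
noncomputable def maxnorm (s : ℕ) (a : Fin s → ℤ) : ℝ :=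
  ((Finset.univ.sup fun j => (a j).natAbs : ℕ) : ℝ)

/-!
If `a` admits a small nonzero solution `x`, it also admits one with coprime coordinates, so it
suffices to count pairs `(a, y)` with `y` primitive and `|y| ≤ L = ⌊c A^(1/(s-k))⌋`. For a fixed
primitive `y` the numbers `y_j^k` generate the unit ideal. Choosing `j` with `|y_j| = |y|`, a
solution `a` in the box `[-A, A]^s` is determined by its other coordinates, and these satisfy a
linear congruence modulo `|y|^k` that is solvable for every right-hand side; so there are at most
`(3A)^(s-1) / |y|^k` solutions. Since `L^k ≤ A` needs `k ≤ s - k`, this is where `s ≥ 2k` enters.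
Summing `|y|^(-k)` over the box of side `L`, shell by shell, gives `O(L^(s-k)) = O(c^(s-k) A)`,
hence at most `O(c^(s-k)) A^s` exceptional `a`, and `c` is chosen small in terms of `η`.
-/

open Finset

theorem card_filter_sum_mul_eq_zero_mul {ι : Type*} [Fintype ι] [DecidableEq ι] {m : ℕ}
    [NeZero m] (w c : ι → ZMod m) (hc : ∑ i, c i * w i = 1) :
    #{r : ι → ZMod m | ∑ i, r i * w i = 0} * m = m ^ Fintype.card ι := by
  let f : (ι → ZMod m) →+ ZMod m :=
    AddMonoidHom.mk' (fun r => ∑ i, r i * w i) (by simp [add_mul, sum_add_distrib])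
  have hf : Function.Surjective f := fun u =>
    ⟨fun i => u * c i, by simp [f, mul_assoc, ← mul_sum, hc]⟩
  have key := f.ker.card_mul_index
  rw [AddSubgroup.index_ker, AddMonoidHom.range_eq_top.mpr hf] at key
  simpa [Nat.card_eq_fintype_card, Fintype.card_subtype, f] using key

theorem card_filter_intCast_eq_le (N m : ℕ) [NeZero m] (ρ : ZMod m) :
    #{a ∈ Icc (-(N : ℤ)) N | ((a : ℤ) : ZMod m) = ρ} ≤ 2 * N / m + 1 := by
  rw [← card_range (2 * N / m + 1)]
  -- two points of the fibre with the same quotient `(a + N) / m` also share the remainder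
  refine card_le_card_of_injOn (fun a : ℤ => (a + N).toNat / m) (fun a ha => ?_)
    (fun a ha b hb hab => ?_)
  · simp only [mem_coe, mem_filter, mem_Icc] at ha
    simp only [coe_range, Set.mem_Iio, Nat.lt_succ_iff]
    exact Nat.div_le_div_right (by omega)
  · simp only [mem_coe, mem_filter, mem_Icc] at ha hb
    have hcast : (((a + N).toNat : ℕ) : ZMod m) = ((b + N).toNat : ℕ) := by
      have h1 : (((a + N).toNat : ℕ) : ℤ) = a + N := by omega
      have h2 : (((b + N).toNat : ℕ) : ℤ) = b + N := by omega
      rw [← Int.cast_natCast, h1, ← Int.cast_natCast (R := ZMod m), h2]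
      push_cast
      rw [ha.2, hb.2]
    rw [ZMod.natCast_eq_natCast_iff'] at hcast
    have := Nat.div_add_mod ((a + N).toNat) m
    have := Nat.div_add_mod ((b + N).toNat) m
    simp only at hab
    rw [hab, hcast] at *
    omega

noncomputable def latticeBox (s N : ℕ) : Finset (Fin s → ℤ) :=
  Fintype.piFinset fun _ => Icc (-(N : ℤ)) N

def supNorm {s : ℕ} (y : Fin s → ℤ) : ℕ := univ.sup fun j => (y j).natAbs

theorem le_supNorm {s : ℕ} (y : Fin s → ℤ) (j : Fin s) : (y j).natAbs ≤ supNorm y :=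
  le_sup (f := fun j => (y j).natAbs) (mem_univ j)

theorem supNorm_eq_zero {s : ℕ} {y : Fin s → ℤ} : supNorm y = 0 ↔ y = 0 := by
  simp [supNorm, funext_iff]

theorem mem_latticeBox {s N : ℕ} {y : Fin s → ℤ} : y ∈ latticeBox s N ↔ supNorm y ≤ N := by
  simp only [latticeBox, Fintype.mem_piFinset, mem_Icc, supNorm, Finset.sup_le_iff, mem_univ,
    true_implies]
  exact forall_congr' fun j => by omega

theorem exists_natAbs_eq_supNorm {s : ℕ} {y : Fin s → ℤ} (hy : supNorm y ≠ 0) :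
    ∃ j, (y j).natAbs = supNorm y := by
  have : Nonempty (Fin s) := Fin.pos_iff_nonempty.mp <| Nat.pos_of_ne_zero fun h => hy <| by
    subst h; simp [supNorm]
  obtain ⟨j, -, hj⟩ := exists_mem_eq_sup univ univ_nonempty fun j => (y j).natAbs
  exact ⟨j, hj.symm⟩

theorem card_latticeBox_filter_congr_mul_le {n : ℕ} (N m : ℕ) [NeZero m] (w c : Fin n → ℤ)
    (hc : ∑ i, (c i * w i : ZMod m) = 1) :
    #{b ∈ latticeBox n N | ((∑ i, b i * w i : ℤ) : ZMod m) = 0} * m ≤ (2 * N + m) ^ n := by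
  set S := {b ∈ latticeBox n N | ((∑ i, b i * w i : ℤ) : ZMod m) = 0}
  let reduce : (Fin n → ℤ) → (Fin n → ZMod m) := fun b i => b i
  have hfiber : ∀ ρ ∈ S.image reduce, #{b ∈ S | reduce b = ρ} ≤ (2 * N / m + 1) ^ n := by
    intro ρ _
    calc #{b ∈ S | reduce b = ρ}
        ≤ #(Fintype.piFinset fun i => {a ∈ Icc (-(N : ℤ)) N | ((a : ℤ) : ZMod m) = ρ i}) := by
          refine card_le_card fun b hb => ?_
          simp only [S, latticeBox, mem_filter, Fintype.mem_piFinset] at hb ⊢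
          exact fun i => ⟨hb.1.1 i, congrFun hb.2 i⟩
      _ ≤ (2 * N / m + 1) ^ n := by
          rw [Fintype.card_piFinset]
          simpa using prod_le_pow_card univ _ _ fun i _ => card_filter_intCast_eq_le N m (ρ i)
  have himage : S.image reduce ⊆ ({r : Fin n → ZMod m | ∑ i, r i * w i = 0} : Finset _) := by
    intro r hr
    obtain ⟨b, hb, rfl⟩ := mem_image.mp hr
    simpa [S, reduce] using (mem_filter.mp hb).2
  calc #S * m ≤ (2 * N / m + 1) ^ n * #{r : Fin n → ZMod m | ∑ i, r i * w i = 0} * m := by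
        gcongr
        exact (card_le_mul_card_image S _ hfiber).trans (by gcongr)
    _ = ((2 * N / m + 1) * m) ^ n := by
        rw [mul_assoc, card_filter_sum_mul_eq_zero_mul _ (fun i => (c i : ZMod m))
          (by simpa using hc), Fintype.card_fin, mul_pow]
    _ ≤ (2 * N + m) ^ n := by
        gcongr
        rw [add_mul, one_mul]
        exact Nat.add_le_add_right (Nat.div_mul_le_self _ _) m

theorem card_latticeBox_filter_sum_mul_eq_zero_mul_le {n : ℕ} (N : ℕ) {w : Fin (n + 1) → ℤ}
    (hw : Ideal.span (Set.range w) = ⊤) {j : Fin (n + 1)} (hj : w j ≠ 0) :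
    #{a ∈ latticeBox (n + 1) N | ∑ i, a i * w i = 0} * (w j).natAbs
      ≤ (2 * N + (w j).natAbs) ^ n := by
  set m := (w j).natAbs
  have : NeZero m := ⟨Int.natAbs_ne_zero.mpr hj⟩
  have hwj : (w j : ZMod m) = 0 :=
    (ZMod.intCast_zmod_eq_zero_iff_dvd _ _).mpr (Int.natAbs_dvd.mpr dvd_rfl)
  obtain ⟨c, hc⟩ := Ideal.mem_span_range_iff_exists_fun.mp ((Ideal.eq_top_iff_one _).mp hw)
  have hc' : ∑ i, ((c (j.succAbove i) * w (j.succAbove i) : ℤ) : ZMod m) = 1 := by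
    have := congrArg (Int.cast : ℤ → ZMod m) hc
    push_cast [Fin.sum_univ_succAbove _ j, hwj] at this
    simpa using this
  -- a solution is determined by its coordinates off `j`, which satisfy the equation mod `w j`
  refine (Nat.mul_le_mul_right m (card_le_card_of_injOn (Fin.removeNth j) ?_ ?_)).trans
    (card_latticeBox_filter_congr_mul_le N m _ _ (by simpa using hc'))
  · intro a ha
    simp only [mem_coe, mem_filter, latticeBox, Fintype.mem_piFinset] at ha ⊢
    refine ⟨fun i => ha.1 _, ?_⟩
    have := congrArg (Int.cast : ℤ → ZMod m) ha.2
    push_cast [Fin.sum_univ_succAbove _ j, hwj] at this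
    simpa [Fin.removeNth] using this
  · intro a ha b hb hab
    simp only [mem_coe, mem_filter] at ha hb
    have hrest (i : Fin n) : a (j.succAbove i) = b (j.succAbove i) := congrFun hab i
    rw [Fin.sum_univ_succAbove _ j] at ha hb
    simp only [hrest] at ha
    have : a j = b j := mul_right_cancel₀ hj (by linarith [ha.2, hb.2])
    exact funext ((Fin.forall_iff_succAbove j).mpr ⟨this, hrest⟩)

theorem ne_zero_of_span_range_eq_top {R ι : Type*} [CommRing R] [Nontrivial R] {y : ι → R}
    (hy : Ideal.span (Set.range y) = ⊤) : y ≠ 0 := by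
  rintro rfl
  have : Ideal.span (Set.range (0 : ι → R)) = ⊥ :=
    Ideal.span_eq_bot.mpr (by rintro _ ⟨j, rfl⟩; rfl)
  exact top_ne_bot (hy.symm.trans this)

theorem exists_eq_smul_and_span_range_eq_top {R ι : Type*} [CommRing R] [IsDomain R]
    [IsPrincipalIdealRing R] [Fintype ι] {x : ι → R} (hx : x ≠ 0) :
    ∃ g : R, g ≠ 0 ∧ ∃ y : ι → R, x = g • y ∧ Ideal.span (Set.range y) = ⊤ := by
  obtain ⟨g, hg⟩ := Submodule.IsPrincipal.principal (Ideal.span (Set.range x))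
  have hdvd (i : ι) : g ∣ x i := by
    rw [← Ideal.mem_span_singleton, ← Ideal.submodule_span_eq, ← hg]
    exact Ideal.subset_span ⟨i, rfl⟩
  choose y hy using hdvd
  have hg0 : g ≠ 0 := by
    rintro rfl
    exact hx (funext fun i => by simpa using hy i)
  obtain ⟨c, hc⟩ := Ideal.mem_span_range_iff_exists_fun.mp
    (hg ▸ Submodule.mem_span_singleton_self g : g ∈ Ideal.span (Set.range x))
  refine ⟨g, hg0, y, funext hy, (Ideal.eq_top_iff_one _).mpr
    (Ideal.mem_span_range_iff_exists_fun.mpr ⟨c, mul_left_cancel₀ hg0 ?_⟩)⟩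
  rw [mul_one, mul_sum]
  conv_rhs => rw [← hc]
  exact sum_congr rfl fun i _ => by rw [hy, mul_left_comm]

theorem card_latticeBox_filter_diagonal_mul_le {s : ℕ} (k N : ℕ) {y : Fin s → ℤ}
    (hy : Ideal.span (Set.range y) = ⊤) :
    #{a ∈ latticeBox s N | ∑ j, a j * y j ^ k = 0} * supNorm y ^ k
      ≤ (2 * N + supNorm y ^ k) ^ (s - 1) := by
  obtain ⟨j, hj⟩ := exists_natAbs_eq_supNorm
    (supNorm_eq_zero.not.mpr (ne_zero_of_span_range_eq_top hy))
  obtain ⟨n, rfl⟩ : ∃ n, s = n + 1 := Nat.exists_eq_add_one.mpr (Fin.pos j)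
  have hpow : Ideal.span (Set.range fun i => y i ^ k) = ⊤ := by
    rw [← Ideal.span_pow_eq_top _ hy k, ← Set.range_comp]; rfl
  have hyj : y j ≠ 0 := fun h => ne_zero_of_span_range_eq_top hy <| supNorm_eq_zero.mp <| by
    rw [← hj, h, Int.natAbs_zero]
  have := card_latticeBox_filter_sum_mul_eq_zero_mul_le N hpow (pow_ne_zero k hyj)
  rwa [Int.natAbs_pow, hj] at this

theorem card_latticeBox_filter_diagonal_le {s k N : ℕ} {A : ℝ} {y : Fin s → ℤ}
    (hy : Ideal.span (Set.range y) = ⊤) (hN : (N : ℝ) ≤ A) (hyA : (supNorm y : ℝ) ^ k ≤ A) :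
    (#{a ∈ latticeBox s N | ∑ j, a j * y j ^ k = 0} : ℝ)
      ≤ (3 * A) ^ (s - 1) * ((supNorm y : ℝ)⁻¹) ^ k := by
  have hY : (0 : ℝ) < supNorm y := by
    exact_mod_cast Nat.pos_of_ne_zero (supNorm_eq_zero.not.mpr (ne_zero_of_span_range_eq_top hy))
  rw [inv_pow, ← div_eq_mul_inv, le_div_iff₀ (by positivity)]
  calc _ ≤ ((2 * N + supNorm y ^ k : ℕ) : ℝ) ^ (s - 1) := by
        exact_mod_cast card_latticeBox_filter_diagonal_mul_le k N hy
    _ ≤ (3 * A) ^ (s - 1) := by gcongr; push_cast; linarith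

theorem card_filter_supNorm_eq_le (s : ℕ) {v : ℕ} (hv : v ≠ 0) :
    #{y ∈ latticeBox s v | supNorm y = v} ≤ 2 * s * (2 * v + 1) ^ (s - 1) := by
  let face (j : Fin s) : Finset (Fin s → ℤ) :=
    Fintype.piFinset fun i => if i = j then {-(v : ℤ), (v : ℤ)} else Icc (-(v : ℤ)) v
  have hsub : {y ∈ latticeBox s v | supNorm y = v} ⊆ univ.biUnion face := by
    intro y hy
    obtain ⟨hbox, hnorm⟩ := mem_filter.mp hy
    obtain ⟨j, hj⟩ := exists_natAbs_eq_supNorm (hnorm ▸ hv)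
    refine mem_biUnion.mpr ⟨j, mem_univ j, Fintype.mem_piFinset.mpr fun i => ?_⟩
    have hi := le_supNorm y i
    split_ifs with hij
    · subst hij; simp only [mem_insert, mem_singleton]; omega
    · rw [mem_Icc]; omega
  have hface (j : Fin s) : #(face j) ≤ 2 * (2 * v + 1) ^ (s - 1) := by
    rw [Fintype.card_piFinset, Fintype.prod_eq_mul_prod_compl j, if_pos rfl,
      prod_congr rfl fun i hi => by rw [if_neg (by simpa using hi)], prod_const, card_compl,
      card_singleton, Fintype.card_fin, Int.card_Icc]
    gcongr
    · exact card_le_two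
    · omega
  calc #{y ∈ latticeBox s v | supNorm y = v} ≤ ∑ j, #(face j) :=
        (card_le_card hsub).trans card_biUnion_le
    _ ≤ ∑ _j : Fin s, 2 * (2 * v + 1) ^ (s - 1) := sum_le_sum fun j _ => hface j
    _ = 2 * s * (2 * v + 1) ^ (s - 1) := by
        rw [sum_const, card_univ, Fintype.card_fin, smul_eq_mul]; ring

theorem sum_inv_supNorm_pow_le {s k : ℕ} (hks : k < s) (L : ℕ) :
    ∑ y ∈ (latticeBox s L).erase 0, ((supNorm y : ℝ)⁻¹) ^ k
      ≤ 2 * s * 3 ^ (s - 1) * (L : ℝ) ^ (s - k) := by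
  have hmaps : ∀ y ∈ (latticeBox s L).erase 0, supNorm y ∈ Icc 1 L := fun y hy => by
    obtain ⟨hy0, hy⟩ := mem_erase.mp hy
    exact mem_Icc.mpr ⟨Nat.one_le_iff_ne_zero.mpr (supNorm_eq_zero.not.mpr hy0),
      mem_latticeBox.mp hy⟩
  have hshell : ∀ v ∈ Icc 1 L, ∑ y ∈ (latticeBox s L).erase 0 with supNorm y = v,
      ((supNorm y : ℝ)⁻¹) ^ k ≤ 2 * s * 3 ^ (s - 1) * (L : ℝ) ^ (s - 1 - k) := by
    intro v hv
    obtain ⟨hv1, hvL⟩ := mem_Icc.mp hv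
    have hv0 : (0 : ℝ) < v := by exact_mod_cast hv1
    have hcard : #{y ∈ (latticeBox s L).erase 0 | supNorm y = v}
        ≤ 2 * s * (2 * v + 1) ^ (s - 1) := by
      refine (card_le_card fun y hy => ?_).trans (card_filter_supNorm_eq_le s (by omega))
      obtain ⟨-, hy⟩ := mem_filter.mp hy
      exact mem_filter.mpr ⟨mem_latticeBox.mpr hy.le, hy⟩
    rw [sum_congr rfl fun y hy => by rw [(mem_filter.mp hy).2], sum_const, nsmul_eq_mul]
    calc (#{y ∈ (latticeBox s L).erase 0 | supNorm y = v} : ℝ) * ((v : ℝ)⁻¹) ^ k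
        ≤ 2 * s * (3 * v) ^ (s - 1) * ((v : ℝ)⁻¹) ^ k := by
          gcongr
          refine (Nat.cast_le.mpr hcard).trans ?_
          push_cast
          gcongr
          linarith [(Nat.one_le_cast (α := ℝ)).mpr hv1]
      _ = 2 * s * 3 ^ (s - 1) * (v : ℝ) ^ (s - 1 - k) := by
          rw [mul_pow, inv_pow, pow_sub₀ (v : ℝ) hv0.ne' (show k ≤ s - 1 by omega)]
          ring
      _ ≤ 2 * s * 3 ^ (s - 1) * (L : ℝ) ^ (s - 1 - k) := by gcongr
  rw [← sum_fiberwise_of_maps_to hmaps]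
  calc _ ≤ ∑ _v ∈ Icc 1 L, 2 * s * 3 ^ (s - 1) * (L : ℝ) ^ (s - 1 - k) := sum_le_sum hshell
    _ = 2 * s * 3 ^ (s - 1) * (L : ℝ) ^ (s - k) := by
          rw [sum_const, Nat.card_Icc, nsmul_eq_mul, show s - k = s - 1 - k + 1 by omega, pow_succ]
          push_cast
          ring

theorem floor_mul_rpow_one_div_pow_le {c A : ℝ} {k t : ℕ} (hc0 : 0 ≤ c) (hc1 : c ≤ 1) (hA : 1 ≤ A)
    (hkt : k ≤ t) (ht : t ≠ 0) :
    (⌊c * A ^ (1 / (t : ℝ))⌋₊ : ℝ) ^ k ≤ A ∧ (⌊c * A ^ (1 / (t : ℝ))⌋₊ : ℝ) ^ t ≤ c ^ t * A := by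
  have hρ : (A ^ (1 / (t : ℝ))) ^ t = A := by
    rw [one_div, Real.rpow_inv_natCast_pow (by linarith) ht]
  set ρ := A ^ (1 / (t : ℝ))
  have hρ1 : 1 ≤ ρ := Real.one_le_rpow hA (by positivity)
  have hfloor : (⌊c * ρ⌋₊ : ℝ) ≤ c * ρ := Nat.floor_le (by positivity)
  constructor
  · calc (⌊c * ρ⌋₊ : ℝ) ^ k ≤ ρ ^ k := by gcongr; nlinarith
      _ ≤ ρ ^ t := pow_le_pow_right₀ hρ1 hkt
      _ = A := hρ
  · calc (⌊c * ρ⌋₊ : ℝ) ^ t ≤ (c * ρ) ^ t := by gcongr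
      _ = c ^ t * A := by rw [mul_pow, hρ]

def exceptionalSet (k s : ℕ) (c A : ℝ) : Set (Fin s → ℤ) :=
  {a | (∀ j, a j ≠ 0 ∧ (|a j| : ℝ) ≤ A) ∧
    ∃ x : Fin s → ℤ, x ≠ 0 ∧
      (∀ j, (|x j| : ℝ) ≤ c * (maxnorm s a) ^ (1 / ((s : ℝ) - (k : ℝ)))) ∧
      ∑ j, a j * x j ^ k = 0}

theorem exists_primitive_of_mem_exceptionalSet {k s : ℕ} {c A : ℝ} (hks : k ≤ s) (hc : 0 ≤ c)
    (hA : 0 ≤ A) {a : Fin s → ℤ} (ha : a ∈ exceptionalSet k s c A) :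
    a ∈ latticeBox s ⌊A⌋₊ ∧ ∃ y ∈ latticeBox s ⌊c * A ^ (1 / ((s - k : ℕ) : ℝ))⌋₊,
      Ideal.span (Set.range y) = ⊤ ∧ ∑ j, a j * y j ^ k = 0 := by
  obtain ⟨ha, x, hx0, hxc, hax⟩ := ha
  have haN : a ∈ latticeBox s ⌊A⌋₊ := mem_latticeBox.mpr <| Finset.sup_le fun j _ =>
    Nat.le_floor (by rw [Nat.cast_natAbs, Int.cast_abs]; exact (ha j).2)
  have hnorm : maxnorm s a ≤ A :=
    (Nat.cast_le.mpr (mem_latticeBox.mp haN)).trans (Nat.floor_le hA)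
  obtain ⟨g, hg0, y, rfl, hy⟩ := exists_eq_smul_and_span_range_eq_top hx0
  refine ⟨haN, y, mem_latticeBox.mpr <| Finset.sup_le fun j _ => Nat.le_floor ?_, hy, ?_⟩
  · rw [Nat.cast_natAbs, Int.cast_abs, Nat.cast_sub hks]
    calc |(y j : ℝ)| ≤ |((g • y) j : ℝ)| := by
          simpa [abs_mul] using le_mul_of_one_le_left (abs_nonneg _)
            (by exact_mod_cast Int.one_le_abs hg0)
      _ ≤ c * maxnorm s a ^ (1 / ((s : ℝ) - k)) := hxc j
      _ ≤ c * A ^ (1 / ((s : ℝ) - k)) := by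
          gcongr
          · exact Nat.cast_nonneg _
          · exact one_div_nonneg.mpr (sub_nonneg.mpr (by exact_mod_cast hks))
  · have : g ^ k * ∑ j, a j * y j ^ k = 0 := by
      rw [← hax, mul_sum]
      exact sum_congr rfl fun j _ => by simp only [Pi.smul_apply, smul_eq_mul]; ring
    exact (mul_eq_zero.mp this).resolve_left (pow_ne_zero k hg0)

theorem ncard_exceptionalSet_le {k s : ℕ} (hk : k ≠ 0) (hks : 2 * k ≤ s) {c A : ℝ} (hc0 : 0 ≤ c)
    (hc1 : c ≤ 1) (hA : 1 ≤ A) :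
    ((exceptionalSet k s c A).ncard : ℝ)
      ≤ 3 ^ (s - 1) * (2 * s * 3 ^ (s - 1)) * c ^ (s - k) * A ^ s := by
  classical
  set L := ⌊c * A ^ (1 / ((s - k : ℕ) : ℝ))⌋₊
  obtain ⟨hLk, hLt⟩ := floor_mul_rpow_one_div_pow_le hc0 hc1 hA (k := k) (t := s - k) (by omega)
    (by omega)
  let primitives := {y ∈ latticeBox s L | Ideal.span (Set.range y) = ⊤}
  let solutions (y : Fin s → ℤ) := {a ∈ latticeBox s ⌊A⌋₊ | ∑ j, a j * y j ^ k = 0}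
  have hsub : exceptionalSet k s c A ⊆ ↑(primitives.biUnion solutions) := fun a ha => by
    obtain ⟨haN, y, hyL, hy, hay⟩ :=
      exists_primitive_of_mem_exceptionalSet (by omega) hc0 (by linarith) ha
    exact mem_biUnion.mpr ⟨y, mem_filter.mpr ⟨hyL, hy⟩, mem_filter.mpr ⟨haN, hay⟩⟩
  have hsol : ∀ y ∈ primitives,
      (#(solutions y) : ℝ) ≤ (3 * A) ^ (s - 1) * ((supNorm y : ℝ)⁻¹) ^ k := fun y hy => by
    obtain ⟨hyL, hy⟩ := mem_filter.mp hy
    refine card_latticeBox_filter_diagonal_le hy (Nat.floor_le (by linarith)) ?_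
    exact (pow_le_pow_left₀ (Nat.cast_nonneg _)
      (Nat.cast_le.mpr (mem_latticeBox.mp hyL)) k).trans hLk
  have hprim : primitives ⊆ (latticeBox s L).erase 0 := fun y hy =>
    mem_erase.mpr ⟨ne_zero_of_span_range_eq_top (mem_filter.mp hy).2, (mem_filter.mp hy).1⟩
  calc ((exceptionalSet k s c A).ncard : ℝ) ≤ #(primitives.biUnion solutions) := by
        exact_mod_cast (Set.ncard_le_ncard hsub (finite_toSet _)).trans_eq (Set.ncard_coe_finset _)
    _ ≤ ∑ y ∈ primitives, (#(solutions y) : ℝ) := by exact_mod_cast card_biUnion_le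
    _ ≤ (3 * A) ^ (s - 1) * ∑ y ∈ (latticeBox s L).erase 0, ((supNorm y : ℝ)⁻¹) ^ k := by
        rw [mul_sum]
        exact (sum_le_sum hsol).trans
          (sum_le_sum_of_subset_of_nonneg hprim fun _ _ _ => by positivity)
    _ ≤ (3 * A) ^ (s - 1) * (2 * s * 3 ^ (s - 1) * (c ^ (s - k) * A)) := by
        gcongr
        exact (sum_inv_supNorm_pow_le (by omega) L).trans (by gcongr)
    _ = 3 ^ (s - 1) * (2 * s * 3 ^ (s - 1)) * c ^ (s - k) * A ^ s := by
        rw [mul_pow, ← Nat.sub_add_cancel (show 1 ≤ s by omega), pow_succ, Nat.add_sub_cancel]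
        ring

/-- **Theorem 1.4.** Let `s ≥ 2k` and `η > 0`. There is `c = c(k,s,η) > 0` such that the
number of `a` with `|a| ≤ A` for which `a_1 x_1^k + ⋯ + a_s x_s^k = 0` admits an integral
solution with `0 < |x| ≤ c |a|^(1/(s-k))` does not exceed `η A^s`. -/
theorem small_solutions_rare (k s : ℕ) (hk : 3 ≤ k) (hs : 2 * k ≤ s)
    (η : ℝ) (hη : 0 < η) :
    ∃ c : ℝ, 0 < c ∧ ∀ A : ℝ, 1 ≤ A →
      (Set.ncard {a : Fin s → ℤ | (∀ j, a j ≠ 0 ∧ (|a j| : ℝ) ≤ A) ∧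
          ∃ x : Fin s → ℤ, x ≠ 0 ∧
            (∀ j, (|x j| : ℝ) ≤ c * (maxnorm s a) ^ (1 / ((s : ℝ) - (k : ℝ)))) ∧
            ∑ j, a j * x j ^ k = 0} : ℝ)
        ≤ η * A ^ (s : ℝ) := by
  set K : ℝ := 3 ^ (s - 1) * (2 * s * 3 ^ (s - 1))
  set c := min 1 (η / (K + 1))
  have hc0 : 0 < c := lt_min one_pos (by positivity)
  have hcK : K * c ^ (s - k) ≤ η :=
    calc K * c ^ (s - k) ≤ (K + 1) * c := by
          gcongr
          · linarith
          · exact pow_le_of_le_one hc0.le (min_le_left _ _) (by omega)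
      _ ≤ (K + 1) * (η / (K + 1)) := by gcongr; exact min_le_right _ _
      _ = η := mul_div_cancel₀ _ (by positivity)
  refine ⟨c, hc0, fun A hA => ?_⟩
  calc _ ≤ K * c ^ (s - k) * A ^ s :=
        ncard_exceptionalSet_le (by omega) hs hc0.le (min_le_left _ _) hA
    _ ≤ η * A ^ s := by gcongr
    _ = η * A ^ (s : ℝ) := by rw [Real.rpow_natCast]
end

section
/- Let k ≥ 2, let p be a prime, let t ≥ 1, and let q be an integer with 1 ≤ q < p such that the congruence x^k ≡ q (mod p) has no solution (q is a k-th power non-residue modulo p). Then every x = (x_1,…,x_{2t}) ∈ ℤ^{2t} with x ≠ 0 satisfying (x_1^k − q x_2^k) + p(x_3^k − q x_4^k) + ⋯ + p^{t−1}(x_{2t−1}^k − q x_{2t}^k) = 0 has max_j |x_j| ≥ p. -/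
/-!
Reduce modulo `p`: the term `x₁ᵏ - q x₂ᵏ` of the sum is divisible by `p`, so `x₁ᵏ ≡ q x₂ᵏ`, and
since `q` is not a `k`-th power modulo `p` this forces `p ∣ x₂` and then `p ∣ x₁`. If all
`|xⱼ| < p`, this makes `x₁ = x₂ = 0`; the remaining sum is `p` times a sum of the same shape, so
the argument repeats and `x = 0`.
-/

theorem eq_zero_of_pow_eq_mul_pow {F : Type*} [CommGroupWithZero F] {k : ℕ} {q a b : F}
    (hq : ∀ u : F, u ^ k ≠ q) (h : a ^ k = q * b ^ k) : a = 0 ∧ b = 0 := by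
  have hb : b = 0 := by
    by_contra hb
    exact hq (a / b) (by rw [div_pow, h, mul_div_cancel_right₀ _ (pow_ne_zero _ hb)])
  subst hb
  have hk : k ≠ 0 := by
    rintro rfl
    exact hq 1 (by simpa using h)
  exact ⟨pow_eq_zero_iff hk |>.mp (by simpa [zero_pow hk] using h), rfl⟩

theorem Int.eq_zero_of_dvd_pow_sub_mul_pow {p : ℕ} [Fact p.Prime] {k : ℕ} {q : ℤ}
    (hq : ¬ ∃ x : ℤ, (p : ℤ) ∣ x ^ k - q) {a b : ℤ} (ha : |a| < p) (hb : |b| < p)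
    (h : (p : ℤ) ∣ a ^ k - q * b ^ k) : a = 0 ∧ b = 0 := by
  have hq' : ∀ u : ZMod p, u ^ k ≠ q := by
    intro u hu
    obtain ⟨x, rfl⟩ := ZMod.intCast_surjective u
    refine hq ⟨x, (ZMod.intCast_zmod_eq_zero_iff_dvd _ p).mp ?_⟩
    push_cast
    rw [hu, sub_self]
  have hmod : (a : ZMod p) ^ k = q * (b : ZMod p) ^ k := by
    have := (ZMod.intCast_zmod_eq_zero_iff_dvd _ p).mpr h
    push_cast at this
    exact sub_eq_zero.mp this
  obtain ⟨ha0, hb0⟩ := eq_zero_of_pow_eq_mul_pow hq' hmod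
  rw [ZMod.intCast_zmod_eq_zero_iff_dvd] at ha0 hb0
  exact ⟨Int.eq_zero_of_abs_lt_dvd ha0 ha, Int.eq_zero_of_abs_lt_dvd hb0 hb⟩

theorem eq_zero_of_sum_pow_mul_eq_zero {R : Type*} [CommRing R] [NoZeroDivisors R] {p : R}
    (hp : p ≠ 0) {t : ℕ} {c : Fin t → R} (hc : ∀ i, p ∣ c i → c i = 0)
    (hsum : ∑ j : Fin t, p ^ (j : ℕ) * c j = 0) (i : Fin t) : c i = 0 := by
  induction t with
  | zero => exact i.elim0
  | succ n ih =>
    have hsplit : c 0 + p * ∑ j : Fin n, p ^ (j : ℕ) * c j.succ = 0 := by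
      rw [← hsum, Fin.sum_univ_succ, Finset.mul_sum]
      simp only [Fin.val_zero, pow_zero, one_mul, Fin.val_succ, pow_succ]
      congr 1
      exact Finset.sum_congr rfl fun j _ => by ring
    have hc0 : c 0 = 0 := hc 0 ⟨-∑ j : Fin n, p ^ (j : ℕ) * c j.succ, by
      linear_combination hsplit⟩
    have htail : ∑ j : Fin n, p ^ (j : ℕ) * c j.succ = 0 := by
      rw [hc0, zero_add, mul_eq_zero] at hsplit
      exact hsplit.resolve_left hp
    induction i using Fin.cases with
    | zero => exact hc0
    | succ i => exact ih (fun j => hc j.succ) htail i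

theorem Fin.eq_zero_of_pairs_eq_zero {M : Type*} [Zero M] {t : ℕ} {x : Fin (2 * t) → M}
    (h : ∀ i : Fin t, x ⟨2 * i, by omega⟩ = 0 ∧ x ⟨2 * i + 1, by omega⟩ = 0) : x = 0 := by
  funext j
  have hi : j / 2 < t := by omega
  rcases Nat.mod_two_eq_zero_or_one j with hj | hj
  · simpa [show (⟨2 * (j / 2), by omega⟩ : Fin (2 * t)) = j from Fin.ext (by simp; omega)]
      using (h ⟨j / 2, hi⟩).1
  · simpa [show (⟨2 * (j / 2) + 1, by omega⟩ : Fin (2 * t)) = j from Fin.ext (by simp; omega)]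
      using (h ⟨j / 2, hi⟩).2

/-- If `q` is a `k`-th power non-residue modulo the prime `p`, then any nonzero integral
solution of `(x_1^k - q x_2^k) + p(x_3^k - q x_4^k) + ⋯ + p^(t-1)(x_{2t-1}^k - q x_{2t}^k) = 0`
satisfies `max_j |x_j| ≥ p`. -/
theorem no_small_solution_example (k : ℕ) (p : ℕ) (hp : p.Prime)
    (t : ℕ) (q : ℤ)
    (hnonres : ¬ ∃ x : ℤ, (p : ℤ) ∣ x ^ k - q)
    (x : Fin (2 * t) → ℤ) (hx : x ≠ 0)
    (heq : ∑ i : Fin t, (p : ℤ) ^ (i : ℕ) *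
        (x ⟨2 * i.1, by have := i.2; omega⟩ ^ k - q * x ⟨2 * i.1 + 1, by have := i.2; omega⟩ ^ k)
      = 0) :
    ∃ j, (p : ℤ) ≤ |x j| := by
  have : Fact p.Prime := ⟨hp⟩
  by_contra! hsmall
  have hpair : ∀ i : Fin t, (p : ℤ) ∣ x ⟨2 * i, by omega⟩ ^ k - q * x ⟨2 * i + 1, by omega⟩ ^ k →
      x ⟨2 * i, by omega⟩ = 0 ∧ x ⟨2 * i + 1, by omega⟩ = 0 := fun i =>
    Int.eq_zero_of_dvd_pow_sub_mul_pow hnonres (hsmall _) (hsmall _)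
  have hterms := eq_zero_of_sum_pow_mul_eq_zero (by exact_mod_cast hp.ne_zero) (fun i hi => by
    obtain ⟨ha, hb⟩ := hpair i hi
    rw [ha, hb] at hi ⊢
    rcases eq_or_ne k 0 with rfl | hk
    · exact absurd ⟨1, by simpa using hi⟩ hnonres
    · simp [hk]) heq
  exact hx (Fin.eq_zero_of_pairs_eq_zero fun i => hpair i (by rw [hterms i]; exact dvd_zero _))
end

section
/- Let n ≥ 1 and 1 ≤ r ≤ n, and let b_1,…,b_r ∈ ℤ^n be linearly independent over ℝ; let Λ = ℤb_1 + ⋯ + ℤb_r. Define d(Λ) = sqrt(det((b_i · b_j)_{1≤i,j≤r})) (the discriminant of Λ), and G(Λ) = gcd over all r-element subsets I of {1,…,n} of det(B_I), where B_I denotes the r×r submatrix, with rows indexed by I, of the n×r matrix B with columns b_1,…,b_r. Let Λ* = {x ∈ ℤ^n : b_j · x = 0 for 1 ≤ j ≤ r} be the dual lattice, a sublattice of ℤ^n of rank n − r, with discriminant d(Λ*) defined analogously from any ℤ-basis of Λ* (with the convention d(Λ*) = 1 when r = n). Then d(Λ*) = d(Λ)/G(Λ). -/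
/-!
Put `B` (rows `b_i`) in Smith normal form: `B = P · E`, where `det P ≠ 0` and `E` consists of
the first `r` rows of a unimodular matrix `W`. Then `d(Λ)² = (det P)² · det(E Eᵀ)`, and since `E`
has an integral right inverse its `r × r` minors are coprime, so `G(Λ) = |det P|`. The dual
lattice is the kernel of `E`, spanned by the rows of `Φ`, the last `n - r` columns of `W⁻¹`; Jacobi's
complementary minor identity for the unimodular `W` gives `det(E Eᵀ) = det(Φ Φᵀ) = d(Λ*)²`.
-/

open Matrix Submodule

namespace Matrix

section CommRing

variable {R : Type*} [CommRing R] {m n p : Type*}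

theorem det_mul_eq_sum_prod_mul_det_submatrix [Fintype m] [DecidableEq m] [Fintype n]
    (Y : Matrix m n R) (X : Matrix n m R) :
    (Y * X).det = ∑ g : m → n, (∏ i, Y i (g i)) * (X.submatrix g id).det := by
  have hrows : Y * X = of fun i => ∑ k, Y i k • X k := by
    ext i j; simp [mul_apply]
  calc (Y * X).det
      = detRowAlternating.toMultilinearMap (fun i => ∑ k, Y i k • X k) := by rw [hrows]; rfl
    _ = ∑ g : m → n, detRowAlternating.toMultilinearMap (fun i => Y i (g i) • X (g i)) :=
        MultilinearMap.map_sum _ fun i k => Y i k • X k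
    _ = ∑ g : m → n, (∏ i, Y i (g i)) * (X.submatrix g id).det := by
        refine Finset.sum_congr rfl fun g _ => ?_
        rw [MultilinearMap.map_smul_univ]
        rfl

theorem det_mul_mul_transpose [Fintype m] [DecidableEq m] [Fintype n] (M : Matrix m m R)
    (X : Matrix m n R) : (M * X * (M * X)ᵀ).det = M.det ^ 2 * (X * Xᵀ).det := by
  rw [transpose_mul, Matrix.mul_assoc, ← Matrix.mul_assoc X, ← Matrix.mul_assoc, det_mul,
    det_mul, det_transpose]
  ring

theorem eq_of_mul_eq_mul_of_linearIndependent [Fintype m] {u : m → n → R}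
    (hu : LinearIndependent R u) {M N : Matrix p m R} (h : M * of u = N * of u) : M = N :=
  ext_row fun i => (vecMul_injective_iff.2 hu) congr(($h).row i)

theorem exists_eq_mul_of_forall_mem_span [Fintype m] {u : p → n → R} {v : m → n → R}
    (h : ∀ i, u i ∈ span R (Set.range v)) : ∃ U : Matrix p m R, of u = U * of v := by
  choose U hU using fun i => (mem_span_range_iff_exists_fun R).1 (h i)
  refine ⟨of U, ?_⟩
  ext i l
  simp [mul_apply, ← hU i, Finset.sum_apply]

theorem fromRows_mul_fromCols_eq_one [Fintype n] [DecidableEq m] [DecidableEq p]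
    {E : Matrix m n R} {F : Matrix p n R} {E' : Matrix n m R} {G : Matrix n p R}
    (h : fromRows E F * fromCols E' G = 1) :
    E * E' = 1 ∧ E * G = 0 ∧ F * E' = 0 ∧ F * G = 1 := by
  rw [fromRows_mul_fromCols, ← fromBlocks_one, fromBlocks_inj] at h
  exact h

variable [Fintype m] [DecidableEq m] [Fintype n] [DecidableEq n] [Fintype p] [DecidableEq p]

theorem det_mul_transpose_toRows₁ (W : Matrix (m ⊕ p) n R) (W' : Matrix n (m ⊕ p) R)
    (h : W * W' = 1) (h' : W' * W = 1) :
    (W.toRows₁ * W.toRows₁ᵀ).det = (W * Wᵀ).det * (W'.toCols₂ᵀ * W'.toCols₂).det := by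
  set E := W.toRows₁
  set G := W'.toCols₂
  rw [← fromRows_toRows W, ← fromCols_toCols W'] at h
  obtain ⟨hEE', hEG, -, hFG⟩ := fromRows_mul_fromCols_eq_one h
  -- Both products of `N := fromRows E Gᵀ` below are block triangular.
  have hNWt : (fromRows E Gᵀ * Wᵀ).det = (E * Eᵀ).det := by
    rw [← fromRows_toRows W, transpose_fromRows, fromRows_mul_fromCols, ← transpose_mul,
      ← transpose_mul, hEG, hFG, transpose_zero, transpose_one, det_fromBlocks_zero₂₁, det_one,
      mul_one]
  have hNW' : (fromRows E Gᵀ * W').det = (Gᵀ * G).det := by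
    rw [← fromCols_toCols W', fromRows_mul_fromCols, hEE', hEG, det_fromBlocks_zero₁₂, det_one,
      one_mul]
  rw [← hNWt, ← hNW', mul_comm, ← det_mul, Matrix.mul_assoc, ← Matrix.mul_assoc W', h',
    Matrix.one_mul]

theorem ker_mulVecLin_toRows₁ (W : Matrix (m ⊕ p) n R) (W' : Matrix n (m ⊕ p) R)
    (h : W * W' = 1) (h' : W' * W = 1) :
    LinearMap.ker W.toRows₁.mulVecLin = LinearMap.range W'.toCols₂.mulVecLin := by
  rw [← fromRows_toRows W, ← fromCols_toCols W'] at h h'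
  obtain ⟨-, hEG, -, -⟩ := fromRows_mul_fromCols_eq_one h
  ext x
  simp only [LinearMap.mem_ker, LinearMap.mem_range, mulVecLin_apply]
  constructor
  · intro hx
    refine ⟨W.toRows₂ *ᵥ x, ?_⟩
    have hx' := congrArg (· *ᵥ x) h'
    simpa only [← mulVec_mulVec, fromRows_mulVec, hx, fromCols_mulVec_sumElim, mulVec_zero,
      zero_add, one_mulVec] using hx'
  · rintro ⟨y, rfl⟩
    rw [mulVec_mulVec, hEG, zero_mulVec]

end CommRing

theorem ker_mulVecLin_mul_of_det_ne_zero {R : Type*} [CommRing R] [IsDomain R] {m n : Type*}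
    [Fintype m] [DecidableEq m] [Fintype n] (P : Matrix m m R) (hP : P.det ≠ 0)
    (E : Matrix m n R) : LinearMap.ker (P * E).mulVecLin = LinearMap.ker E.mulVecLin := by
  ext x
  simp only [LinearMap.mem_ker, mulVecLin_apply, ← mulVec_mulVec]
  exact ⟨eq_zero_of_mulVec_eq_zero hP, fun hx => by rw [hx, mulVec_zero]⟩

section GCDMonoid

variable {R : Type*} [CommRing R] [StrongNormalizedGCDMonoid R] {m n : Type*} [Fintype m]
  [DecidableEq m] [Fintype n]

theorem gcd_det_submatrix_eq_one_of_mul_eq_one (Y : Matrix m n R) (X : Matrix n m R)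
    (h : Y * X = 1) : Finset.univ.gcd (fun g : m → n => (X.submatrix g id).det) = 1 := by
  have hexp := det_mul_eq_sum_prod_mul_det_submatrix Y X
  rw [h, det_one] at hexp
  rw [← Finset.normalize_gcd, normalize_eq_one]
  refine isUnit_of_dvd_one ?_
  rw [hexp]
  exact Finset.dvd_sum fun g _ => dvd_mul_of_dvd_right (Finset.gcd_dvd (Finset.mem_univ g)) _

theorem gcd_det_submatrix_mul_transpose (P : Matrix m m R) (E : Matrix m n R)
    (E' : Matrix n m R) (h : E * E' = 1) :
    Finset.univ.gcd (fun g : m → n => ((P * E)ᵀ.submatrix g id).det) = normalize P.det := by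
  have hminor : ∀ g : m → n, ((P * E)ᵀ.submatrix g id).det = P.det * (Eᵀ.submatrix g id).det :=
    fun g => by
      rw [transpose_mul, show (Eᵀ * Pᵀ).submatrix g id = Eᵀ.submatrix g id * Pᵀ from rfl,
        det_mul, det_transpose, mul_comm]
  have hEt : E'ᵀ * Eᵀ = 1 := by rw [← transpose_mul, h, transpose_one]
  simp_rw [hminor]
  rw [Finset.gcd_mul_left, gcd_det_submatrix_eq_one_of_mul_eq_one _ _ hEt, mul_one]

end GCDMonoid

theorem _root_.Int.det_mul_transpose_eq_one {m n : Type*} [Fintype m] [DecidableEq m]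
    [Fintype n] [DecidableEq n] (W : Matrix m n ℤ) (W' : Matrix n m ℤ) (h : W * W' = 1)
    (h' : W' * W = 1) : (W * Wᵀ).det = 1 := by
  obtain ⟨σ⟩ := Fintype.card_eq.1 (square_of_invertible W W' h h')
  have hσ : W.submatrix id σ * W'.submatrix σ id = 1 := by
    rw [submatrix_mul_equiv, h, submatrix_id_id]
  rw [← submatrix_mul_transpose_submatrix σ, ← transpose_submatrix, det_mul, det_transpose, ← sq]
  exact Int.isUnit_sq (isUnit_det_of_right_inverse hσ)

theorem det_mul_transpose_eq_of_span_eq {m n : Type*} [Fintype m] [DecidableEq m] [Fintype n]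
    {u v : m → n → ℤ} (hu : LinearIndependent ℤ u)
    (h : span ℤ (Set.range u) = span ℤ (Set.range v)) :
    (of u * (of u)ᵀ).det = (of v * (of v)ᵀ).det := by
  obtain ⟨U, hU⟩ := exists_eq_mul_of_forall_mem_span (u := u) (v := v) fun i =>
    h ▸ subset_span ⟨i, rfl⟩
  obtain ⟨U', hU'⟩ := exists_eq_mul_of_forall_mem_span (u := v) (v := u) fun i =>
    h.symm ▸ subset_span ⟨i, rfl⟩
  have hUU' : U * U' = 1 :=
    eq_of_mul_eq_mul_of_linearIndependent hu (by rw [Matrix.mul_assoc, ← hU', ← hU, Matrix.one_mul])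
  rw [hU, det_mul_mul_transpose, Int.isUnit_sq (isUnit_det_of_right_inverse hUU'), one_mul]

theorem det_of_intCast_dotProduct {m n : Type*} [Fintype m] [DecidableEq m] [Fintype n]
    (x : m → n → ℤ) :
    (of fun i j => ((∑ l, x i l * x j l : ℤ) : ℝ)).det = ((of x * (of x)ᵀ).det : ℝ) := by
  rw [Int.cast_det]
  rfl

end Matrix

theorem Fin.exists_sumEquiv_extending {r n : ℕ} (f : Fin r ↪ Fin n) :
    ∃ σ : Fin r ⊕ Fin (n - r) ≃ Fin n, ∀ i, σ (Sum.inl i) = f i := by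
  have hrn : r ≤ n := by simpa using Fintype.card_le_of_embedding f
  let τ : Fin r ⊕ Fin (n - r) ≃ Fin n := finSumFinEquiv.trans (finCongr (Nat.add_sub_cancel' hrn))
  obtain ⟨π, hπ⟩ := Equiv.Perm.exists_extending_pair (τ ∘ Sum.inl) f
    (τ.injective.comp Sum.inl_injective) f.injective
  exact ⟨τ.trans π, hπ⟩

/-- Smith normal form: `P = Vᵀ · diag a` with `V` unimodular, and the rows of `W` form a Smith
basis of `Rⁿ`, those carrying the sublattice first. -/
theorem exists_eq_mul_toRows₁ {R : Type*} [CommRing R] [IsDomain R] [IsPrincipalIdealRing R]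
    {r n : ℕ} (b : Fin r → Fin n → R) (hb : LinearIndependent R b) :
    ∃ (P : Matrix (Fin r) (Fin r) R) (W : Matrix (Fin r ⊕ Fin (n - r)) (Fin n) R)
      (W' : Matrix (Fin n) (Fin r ⊕ Fin (n - r)) R),
      P.det ≠ 0 ∧ W * W' = 1 ∧ W' * W = 1 ∧ of b = P * W.toRows₁ := by
  obtain ⟨k, snf⟩ := (span R (Set.range b)).smithNormalForm (Pi.basisFun R (Fin n))
  let bΛ := Module.Basis.span hb
  obtain rfl : k = r := by simpa using Fintype.card_congr (snf.bN.indexEquiv bΛ)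
  obtain ⟨σ, hσ⟩ := Fin.exists_sumEquiv_extending snf.f
  let bM := snf.bM.reindex σ.symm
  let V := snf.bN.toMatrix bΛ
  refine ⟨Vᵀ * diagonal snf.a, ((Pi.basisFun R (Fin n)).toMatrix bM)ᵀ,
    (bM.toMatrix (Pi.basisFun R (Fin n)))ᵀ, ?_, ?_, ?_, ?_⟩
  · have hV : IsUnit V.det := by simpa [Module.Basis.det_apply] using snf.bN.isUnit_det bΛ
    have ha : ∀ i, snf.a i ≠ 0 := fun i ha =>
      snf.bN.ne_zero i (Subtype.ext (by rw [snf.snf i, ha, zero_smul]; rfl))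
    rw [det_mul, det_transpose, det_diagonal]
    exact mul_ne_zero hV.ne_zero (Finset.prod_ne_zero_iff.2 fun i _ => ha i)
  · rw [← transpose_mul, Module.Basis.toMatrix_mul_toMatrix_flip, transpose_one]
  · rw [← transpose_mul, Module.Basis.toMatrix_mul_toMatrix_flip, transpose_one]
  · have hbj : ∀ j, b j = ∑ i, (V i j * snf.a i) • snf.bM (snf.f i) := fun j =>
      calc b j = bΛ j := by simp [bΛ, Module.Basis.span_apply]
        _ = ((∑ i, V i j • snf.bN i : span R (Set.range b)) : Fin n → R) := by
          rw [snf.bN.sum_toMatrix_smul_self]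
        _ = ∑ i, (V i j * snf.a i) • snf.bM (snf.f i) := by simp [snf.snf, mul_smul]
    ext j l
    rw [of_apply, hbj, mul_apply]
    simp [mul_diagonal, bM, hσ, Finset.sum_apply, Module.Basis.toMatrix_apply]

theorem linearIndependent_int_of_intCast {ι n : Type*} {b : ι → n → ℤ}
    (hb : LinearIndependent ℝ fun i j => (b i j : ℝ)) : LinearIndependent ℤ b :=
  LinearIndependent.of_comp (LinearMap.compLeft (Int.castAddHom ℝ).toIntLinearMap n)
    (hb.restrict_scalars' ℤ)

theorem dual_lattice_discriminant_general (n r : ℕ)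
    (b : Fin r → Fin n → ℤ)
    (hb : LinearIndependent ℝ (fun i => fun j => (b i j : ℝ)))
    (c : Fin (n - r) → Fin n → ℤ)
    (hc_indep : LinearIndependent ℤ c)
    (hc_span : (Submodule.span ℤ (Set.range c) : Set (Fin n → ℤ)) =
      {x : Fin n → ℤ | ∀ i, ∑ j, b i j * x j = 0}) :
    Real.sqrt ((Matrix.of fun i j : Fin (n - r) => ((∑ l, c i l * c j l : ℤ) : ℝ)).det) =
      Real.sqrt ((Matrix.of fun i j : Fin r => ((∑ l, b i l * b j l : ℤ) : ℝ)).det) /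
        ((Finset.univ.gcd fun g : Fin r → Fin n =>
          (Matrix.of fun i j : Fin r => b j (g i)).det : ℤ) : ℝ) := by
  obtain ⟨P, W, W', hP, hWW', hW'W, hB⟩ :=
    exists_eq_mul_toRows₁ b (linearIndependent_int_of_intCast hb)
  have hdual : span ℤ (Set.range c) = span ℤ (Set.range W'.toCols₂.col) := by
    rw [← range_mulVecLin, ← ker_mulVecLin_toRows₁ W W' hWW' hW'W,
      ← ker_mulVecLin_mul_of_det_ne_zero P hP, ← hB]
    exact SetLike.coe_injective (hc_span.trans (by ext x; simp [funext_iff, mulVec, dotProduct]))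
  have hgram : (of b * (of b)ᵀ).det = P.det ^ 2 * (of c * (of c)ᵀ).det := by
    rw [hB, det_mul_mul_transpose, det_mul_transpose_toRows₁ W W' hWW' hW'W,
      Int.det_mul_transpose_eq_one W W' hWW' hW'W, one_mul,
      det_mul_transpose_eq_of_span_eq hc_indep hdual]
    rfl
  have hEE' : W.toRows₁ * W'.toCols₁ = 1 :=
    (fromRows_mul_fromCols_eq_one (by rwa [fromRows_toRows, fromCols_toCols])).1
  have hgcd : (Finset.univ.gcd fun g : Fin r → Fin n => (of fun i j : Fin r => b j (g i)).det)
      = |P.det| := by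
    rw [Int.abs_eq_normalize, ← gcd_det_submatrix_mul_transpose P _ _ hEE', ← hB]
    rfl
  have hP' : |(P.det : ℝ)| ≠ 0 := by positivity
  rw [det_of_intCast_dotProduct, det_of_intCast_dotProduct, hgram, hgcd, Int.cast_mul,
    Int.cast_pow, Int.cast_abs, Real.sqrt_mul (sq_nonneg _), Real.sqrt_sq_eq_abs,
    mul_div_cancel_left₀ _ hP']

/-- **Lemma 2.1.** Let `Λ ⊆ ℤ^n` be the lattice of rank `r` spanned by `b_1, …, b_r`
(linearly independent over `ℝ`), with discriminant `d(Λ) = sqrt(det(Gram(b)))`, and let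
`G(Λ)` be the gcd of the `r × r` minors of the matrix with columns `b_1, …, b_r` (computed
here as the gcd of `det(b_{g(i)} entries)` over all row selections `g : Fin r → Fin n`;
non-injective selections contribute `0` and do not affect the gcd). If `c_1, …, c_{n-r}`
is any `ℤ`-basis of the dual lattice `Λ* = {x ∈ ℤ^n : b_j ⬝ x = 0 for all j}`, then
`sqrt(det(Gram(c))) = d(Λ) / G(Λ)`. -/
theorem dual_lattice_discriminant (n r : ℕ) (hn : 1 ≤ n) (hr : 1 ≤ r) (hrn : r ≤ n)
    (b : Fin r → Fin n → ℤ)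
    (hb : LinearIndependent ℝ (fun i => fun j => (b i j : ℝ)))
    (c : Fin (n - r) → Fin n → ℤ)
    (hc_indep : LinearIndependent ℤ c)
    (hc_span : (Submodule.span ℤ (Set.range c) : Set (Fin n → ℤ)) =
      {x : Fin n → ℤ | ∀ i, ∑ j, b i j * x j = 0}) :
    Real.sqrt ((Matrix.of fun i j : Fin (n - r) => ((∑ l, c i l * c j l : ℤ) : ℝ)).det) =
      Real.sqrt ((Matrix.of fun i j : Fin r => ((∑ l, b i l * b j l : ℤ) : ℝ)).det) /
        ((Finset.univ.gcd fun g : Fin r → Fin n =>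
          (Matrix.of fun i j : Fin r => b j (g i)).det : ℤ) : ℝ) :=
  dual_lattice_discriminant_general n r b hb c hc_indep hc_span
end

section
/- Let s ≥ 2, let C ≥ 1 and δ > 0 be real, and for a coefficient vector a ∈ (ℤ∖{0})^s let 𝒫(a) be the set of primes p such that p ≤ C or p divides at least two of a_1,…,a_s, and set P(a) = ∏_{p ∈ 𝒫(a)} p. Then for every ε > 0, the number of a with 0 < |a_j| ≤ A for all j and P(a) > A^δ is ≪ A^(s−δ+ε), with implied constant depending only on s, C, δ, ε. -/
/-- The set `𝒫(a)` of primes `p` with `p ≤ C` or `p` dividing at least two of the `a_j`. -/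
def Pset (s : ℕ) (C : ℝ) (a : Fin s → ℤ) : Set ℕ :=
  {p : ℕ | p.Prime ∧ ((p : ℝ) ≤ C ∨ ∃ i j : Fin s, i ≠ j ∧ (p : ℤ) ∣ a i ∧ (p : ℤ) ∣ a j)}

/-- `P(a) = ∏_{p ∈ 𝒫(a)} p` (a finite product when all `a_j ≠ 0`). -/
noncomputable def Pprod (s : ℕ) (C : ℝ) (a : Fin s → ℤ) : ℕ :=
  ∏ᶠ p ∈ Pset s C a, p

/-!
Every prime of `𝒫(a)` above `C` divides two coordinates `a_i, a_j`; assigning it to one such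
pair gives numbers `d_{ij}` with `P(a) ≤ ⌊C⌋# · ∏ d_{ij}` and `D_i = ∏_j d_{ij} d_{ji} ∣ a_i`.
For fixed `d` at most `∏_i 2A/D_i = (2A)^s / (∏ d)^2` vectors `a` qualify. Summing over the `d`
with `∏ d > T = A^δ / ⌊C⌋#` by Rankin's trick, `(∏ d)^{-2} ≤ T^{θ-1} ∏ d_{ij}^{-1-θ}`, bounds the
count by `(2A)^s T^{θ-1} ζ(1+θ)^{s²}`, which is `≪ A^{s-δ+ε}` once `δθ ≤ ε`.
-/

open Finset

lemma card_filter_ne_zero_dvd_Icc_le (M D : ℕ) :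
    #{x ∈ Icc (-(M : ℤ)) M | x ≠ 0 ∧ (D : ℤ) ∣ x} ≤ 2 * (M / D) := by
  set T := {k ∈ Ioc 0 M | D ∣ k}
  have hsub : {x ∈ Icc (-(M : ℤ)) M | x ≠ 0 ∧ (D : ℤ) ∣ x} ⊆
      T.image (fun k : ℕ => (k : ℤ)) ∪ T.image (fun k : ℕ => -(k : ℤ)) := by
    intro x hx
    simp only [mem_filter, mem_Icc] at hx
    have hk : x.natAbs ∈ T := by
      simp only [T, mem_filter, mem_Ioc]
      exact ⟨⟨Int.natAbs_pos.mpr hx.2.1, by omega⟩, Int.natCast_dvd.mp hx.2.2⟩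
    rcases Int.natAbs_eq x with h | h
    · exact mem_union_left _ (mem_image.mpr ⟨_, hk, h.symm⟩)
    · exact mem_union_right _ (mem_image.mpr ⟨_, hk, h.symm⟩)
  calc _ ≤ #T + #T := (card_le_card hsub).trans
          ((card_union_le _ _).trans (add_le_add card_image_le card_image_le))
    _ = 2 * (M / D) := by rw [Nat.Ioc_filter_dvd_card_eq_div]; ring

lemma card_piFinset_filter_dvd_le {ι : Type*} [Fintype ι] [DecidableEq ι] (M : ℕ)
    (D : ι → ℕ) :
    (#(Fintype.piFinset fun i => {x ∈ Icc (-(M : ℤ)) M | x ≠ 0 ∧ (D i : ℤ) ∣ x}) : ℝ) ≤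
      (2 * M) ^ Fintype.card ι / ∏ i, (D i : ℝ) := by
  rw [Fintype.card_piFinset, ← card_univ, ← prod_const, ← prod_div_distrib, Nat.cast_prod]
  refine prod_le_prod (fun i _ => by positivity) fun i _ => ?_
  calc (#{x ∈ Icc (-(M : ℤ)) M | x ≠ 0 ∧ (D i : ℤ) ∣ x} : ℝ) ≤ ((2 * (M / D i) : ℕ) : ℝ) := by
        exact_mod_cast card_filter_ne_zero_dvd_Icc_le M (D i)
    _ ≤ 2 * M / D i := by
        rw [Nat.cast_mul, mul_div_assoc]
        exact mul_le_mul_of_nonneg_left Nat.cast_div_le (by norm_num)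

def incidentProd {ι M : Type*} [Fintype ι] [CommMonoid M] (d : ι × ι → M) (i : ι) : M :=
  (∏ j, d (i, j)) * ∏ j, d (j, i)

lemma prod_incidentProd {ι M : Type*} [Fintype ι] [CommMonoid M] (d : ι × ι → M) :
    ∏ i, incidentProd d i = (∏ q, d q) ^ 2 := by
  simp only [incidentProd, prod_mul_distrib, Fintype.prod_prod_type]
  rw [prod_comm (f := fun i j => d (j, i)), sq]

lemma exists_incidentProd_dvd {ι : Type*} [Fintype ι] [DecidableEq ι] (a : ι → ℤ)
    (F : Finset ℕ) (hF : ∀ p ∈ F, p.Prime ∧ ∃ i j, i ≠ j ∧ (p : ℤ) ∣ a i ∧ (p : ℤ) ∣ a j) :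
    ∃ d : ι × ι → ℕ, (∀ k, ((incidentProd d k : ℕ) : ℤ) ∣ a k) ∧ ∏ q, d q = ∏ p ∈ F, p := by
  choose i j hij hi hj using fun p : F => (hF p p.2).2
  refine ⟨fun q => ∏ p : F with (i p, j p) = q, (p : ℕ), fun k => ?_, ?_⟩
  · have hrow : ∏ j', ∏ p : F with (i p, j p) = (k, j'), (p : ℕ) =
        ∏ p : F with i p = k, (p : ℕ) := by
      simp only [Prod.mk.injEq, ← filter_filter]
      exact prod_fiberwise _ j _
    have hcol : ∏ i', ∏ p : F with (i p, j p) = (i', k), (p : ℕ) =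
        ∏ p : F with j p = k, (p : ℕ) := by
      simp only [Prod.mk.injEq, and_comm (a := i _ = _), ← filter_filter]
      exact prod_fiberwise _ i _
    have hinc : incidentProd (fun q => ∏ p : F with (i p, j p) = q, (p : ℕ)) k =
        ∏ p ∈ (univ.filter fun p : F => i p = k ∨ j p = k).map (Function.Embedding.subtype _),
          p := by
      rw [incidentProd, hrow, hcol, prod_map, filter_or, prod_union]
      · rfl
      · exact disjoint_filter.mpr fun p _ h1 h2 => hij p (h1.trans h2.symm)
    rw [hinc, Int.natCast_dvd]
    refine prod_primes_dvd _ (fun _ hp => ?_) fun _ hp => ?_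
    · obtain ⟨p, -, rfl⟩ := mem_map.mp hp
      exact (hF p p.2).1.prime
    · obtain ⟨p, hpk, rfl⟩ := mem_map.mp hp
      rcases (mem_filter.mp hpk).2 with h | h
      · exact Int.natCast_dvd.mp (h ▸ hi p)
      · exact Int.natCast_dvd.mp (h ▸ hj p)
  · rw [prod_fiberwise univ (fun p => (i p, j p)) fun p : F => (p : ℕ)]
    exact prod_coe_sort F fun p => p

lemma Pprod_le_primorial_mul {s : ℕ} (C : ℝ) (a : Fin s → ℤ) (F : Finset ℕ)
    (hF : ∀ p ∈ F, p.Prime)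
    (hshared : ∀ p : ℕ, p.Prime → (∃ i j, i ≠ j ∧ (p : ℤ) ∣ a i ∧ (p : ℤ) ∣ a j) → p ∈ F) :
    Pprod s C a ≤ primorial ⌊C⌋₊ * ∏ p ∈ F, p := by
  classical
  set Y := {p ∈ range (⌊C⌋₊ + 1) | p.Prime} ∪ F
  have hY : ∀ p ∈ Y, p.Prime := by
    simp only [Y, mem_union, mem_filter]
    rintro p (hp | hp)
    exacts [hp.2, hF p hp]
  have hPset : Pset s C a = ↑({p ∈ Y | p ∈ Pset s C a}) := by
    refine Set.ext fun p => ⟨fun hp => mem_filter.mpr ⟨?_, hp⟩, fun hp => (mem_filter.mp hp).2⟩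
    obtain ⟨hp, hC | hsh⟩ := hp
    · exact mem_union_left _ (mem_filter.mpr ⟨mem_range_succ_iff.mpr (Nat.le_floor hC), hp⟩)
    · exact mem_union_right _ (hshared p hp hsh)
  rw [Pprod, hPset, finprod_mem_coe_finset]
  calc ∏ p ∈ Y with p ∈ Pset s C a, p ≤ ∏ p ∈ Y, p :=
        prod_le_prod_of_subset_of_one_le' (filter_subset _ _) fun p hp _ => (hY p hp).one_le
    _ ≤ (∏ p ∈ Y, p) * ∏ p ∈ {p ∈ range (⌊C⌋₊ + 1) | p.Prime} ∩ F, p :=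
        Nat.le_mul_of_pos_right _ (prod_pos fun p hp => (hF p (mem_inter.mp hp).2).pos)
    _ = primorial ⌊C⌋₊ * ∏ p ∈ F, p := prod_union_inter

lemma exists_incidentProd_dvd_and_Pprod_le {s : ℕ} (C : ℝ) (a : Fin s → ℤ)
    (ha : ∀ j, a j ≠ 0) :
    ∃ d : Fin s × Fin s → ℕ, (∀ k, ((incidentProd d k : ℕ) : ℤ) ∣ a k) ∧
      Pprod s C a ≤ primorial ⌊C⌋₊ * ∏ q, d q := by
  set F : Finset ℕ := {p ∈ univ.biUnion fun i => (a i).natAbs.primeFactors |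
    ∃ i j, i ≠ j ∧ (p : ℤ) ∣ a i ∧ (p : ℤ) ∣ a j}
  have hF : ∀ p, p ∈ F ↔ p.Prime ∧ ∃ i j, i ≠ j ∧ (p : ℤ) ∣ a i ∧ (p : ℤ) ∣ a j := by
    intro p
    simp only [F, mem_filter, mem_biUnion, mem_univ, true_and, Nat.mem_primeFactors]
    constructor
    · rintro ⟨⟨-, hp, -⟩, h⟩
      exact ⟨hp, h⟩
    · rintro ⟨hp, i, j, hij, hi, hj⟩
      exact ⟨⟨i, hp, Int.natCast_dvd.mp hi, Int.natAbs_ne_zero.mpr (ha i)⟩, i, j, hij, hi, hj⟩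
  obtain ⟨d, hdvd, hprod⟩ := exists_incidentProd_dvd a F fun p hp => (hF p).mp hp
  refine ⟨d, hdvd, hprod ▸ Pprod_le_primorial_mul C a F (fun p hp => ((hF p).mp hp).1)
    fun p hp hsh => (hF p).mpr ⟨hp, hsh⟩⟩

lemma exists_incidentProd_dvd_of_large_Pprod {s : ℕ} {C A δ : ℝ} {a : Fin s → ℤ}
    (ha : ∀ j, a j ≠ 0 ∧ (|a j| : ℝ) ≤ A) (hP : A ^ δ < (Pprod s C a : ℝ)) :
    ∃ d ∈ Fintype.piFinset (fun _ : Fin s × Fin s => Icc 1 ⌊A⌋₊),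
      A ^ δ / primorial ⌊C⌋₊ < ∏ q, (d q : ℝ) ∧ ∀ k, ((incidentProd d k : ℕ) : ℤ) ∣ a k := by
  obtain ⟨d, hdvd, hPle⟩ := exists_incidentProd_dvd_and_Pprod_le C a fun j => (ha j).1
  refine ⟨d, Fintype.mem_piFinset.mpr fun q => mem_Icc.mpr ?_, ?_, hdvd⟩
  · have hq : d q ∣ (a q.1).natAbs := Int.natCast_dvd.mp <| (Int.natCast_dvd_natCast.mpr <|
      (dvd_prod_of_mem _ (mem_univ q.2)).trans (dvd_mul_right _ _)).trans (hdvd q.1)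
    have hpos : 0 < (a q.1).natAbs := Int.natAbs_pos.mpr (ha q.1).1
    refine ⟨Nat.pos_of_dvd_of_pos hq hpos, (Nat.le_of_dvd hpos hq).trans (Nat.le_floor ?_)⟩
    rw [Nat.cast_natAbs, Int.cast_abs]
    exact (ha q.1).2
  · rw [div_lt_iff₀' (by exact_mod_cast primorial_pos _)]
    exact hP.trans_le (by exact_mod_cast hPle)

lemma inv_sq_le_rpow_mul_rpow {x T θ : ℝ} (hT : 0 < T) (hTx : T ≤ x) (hθ : θ ≤ 1) :
    (x ^ 2)⁻¹ ≤ T ^ (θ - 1) * x ^ (-(1 + θ)) := by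
  have hx : 0 < x := hT.trans_le hTx
  calc (x ^ 2)⁻¹ = x ^ (θ - 1) * x ^ (-(1 + θ)) := by
        rw [← Real.rpow_add hx, ← Real.rpow_natCast, ← Real.rpow_neg hx.le]
        ring_nf
    _ ≤ T ^ (θ - 1) * x ^ (-(1 + θ)) :=
        mul_le_mul_of_nonneg_right (Real.rpow_le_rpow_of_nonpos hT hTx (by linarith))
          (Real.rpow_nonneg hx.le _)

lemma sum_inv_sq_prod_le {κ : Type*} [Fintype κ] [DecidableEq κ] (M : ℕ) {T θ : ℝ}
    (hT : 0 < T) (hθ : 0 < θ) (hθ1 : θ ≤ 1) :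
    ∑ d ∈ Fintype.piFinset (fun _ : κ => Icc 1 M) with T < ∏ q, (d q : ℝ),
        ((∏ q, (d q : ℝ)) ^ 2)⁻¹ ≤
      T ^ (θ - 1) * (∑' n : ℕ, (n : ℝ) ^ (-(1 + θ))) ^ Fintype.card κ := by
  have hsum : Summable fun n : ℕ => (n : ℝ) ^ (-(1 + θ)) :=
    Real.summable_nat_rpow.mpr (by linarith)
  calc _ ≤ ∑ d ∈ Fintype.piFinset (fun _ : κ => Icc 1 M) with T < ∏ q, (d q : ℝ),
        T ^ (θ - 1) * ∏ q, (d q : ℝ) ^ (-(1 + θ)) := by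
        refine sum_le_sum fun d hd => ?_
        rw [Real.finsetProd_rpow _ _ (fun q _ => Nat.cast_nonneg _)]
        exact inv_sq_le_rpow_mul_rpow hT (mem_filter.mp hd).2.le hθ1
    _ ≤ T ^ (θ - 1) * ∑ d ∈ Fintype.piFinset (fun _ : κ => Icc 1 M),
          ∏ q, (d q : ℝ) ^ (-(1 + θ)) := by
        rw [← mul_sum]
        exact mul_le_mul_of_nonneg_left (sum_le_sum_of_subset_of_nonneg (filter_subset _ _)
          fun _ _ _ => by positivity) (by positivity)
    _ = T ^ (θ - 1) * (∑ n ∈ Icc 1 M, (n : ℝ) ^ (-(1 + θ))) ^ Fintype.card κ := by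
        rw [← prod_univ_sum (fun _ : κ => Icc 1 M) fun _ n => (n : ℝ) ^ (-(1 + θ)), prod_const,
          card_univ]
    _ ≤ _ := by
        gcongr
        exact hsum.sum_le_tsum _ fun n _ => by positivity

lemma ncard_large_Pprod_le (s : ℕ) (C : ℝ) {δ θ A : ℝ} (hθ : 0 < θ) (hθ1 : θ ≤ 1)
    (hA : 1 ≤ A) :
    (Set.ncard {a : Fin s → ℤ | (∀ j, a j ≠ 0 ∧ (|a j| : ℝ) ≤ A) ∧
        A ^ δ < (Pprod s C a : ℝ)} : ℝ) ≤
      (2 * A) ^ s * (A ^ δ / primorial ⌊C⌋₊) ^ (θ - 1) *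
        (∑' n : ℕ, (n : ℝ) ^ (-(1 + θ))) ^ (s * s) := by
  classical
  set M := ⌊A⌋₊
  set T := A ^ δ / primorial ⌊C⌋₊
  have hT : 0 < T :=
    div_pos (Real.rpow_pos_of_pos (by linarith) _) (by exact_mod_cast primorial_pos _)
  set 𝒟 := {d ∈ Fintype.piFinset (fun _ : Fin s × Fin s => Icc 1 M) | T < ∏ q, (d q : ℝ)}
  set box := fun d : Fin s × Fin s → ℕ => Fintype.piFinset fun i =>
    {x ∈ Icc (-(M : ℤ)) M | x ≠ 0 ∧ ((incidentProd d i : ℕ) : ℤ) ∣ x}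
  have hcover : {a : Fin s → ℤ | (∀ j, a j ≠ 0 ∧ (|a j| : ℝ) ≤ A) ∧
      A ^ δ < (Pprod s C a : ℝ)} ⊆ ↑(𝒟.biUnion box) := by
    rintro a ⟨ha, hP⟩
    obtain ⟨d, hd, hdT, hdvd⟩ := exists_incidentProd_dvd_of_large_Pprod ha hP
    refine mem_biUnion.mpr ⟨d, mem_filter.mpr ⟨hd, hdT⟩, Fintype.mem_piFinset.mpr fun i =>
      mem_filter.mpr ⟨mem_Icc.mpr ?_, (ha i).1, hdvd i⟩⟩
    have : (a i).natAbs ≤ M := Nat.le_floor <| by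
      rw [Nat.cast_natAbs, Int.cast_abs]
      exact (ha i).2
    omega
  have hM : (M : ℝ) ≤ A := Nat.floor_le (by linarith)
  calc _ ≤ ∑ d ∈ 𝒟, (#(box d) : ℝ) := by
        exact_mod_cast ((Set.ncard_le_ncard hcover).trans_eq (Set.ncard_coe_finset _)).trans
          card_biUnion_le
    _ ≤ ∑ d ∈ 𝒟, (2 * M) ^ s / ∏ i, ((incidentProd d i : ℕ) : ℝ) :=
        sum_le_sum fun d _ => (card_piFinset_filter_dvd_le M (incidentProd d)).trans_eq <| by
          rw [Fintype.card_fin]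
    _ = (2 * M) ^ s * ∑ d ∈ 𝒟, ((∏ q, (d q : ℝ)) ^ 2)⁻¹ := by
        rw [mul_sum]
        refine sum_congr rfl fun d _ => ?_
        rw [← Nat.cast_prod, prod_incidentProd, div_eq_mul_inv]
        push_cast
        rfl
    _ ≤ (2 * M) ^ s * (T ^ (θ - 1) * (∑' n : ℕ, (n : ℝ) ^ (-(1 + θ))) ^ (s * s)) := by
        gcongr
        exact (sum_inv_sq_prod_le M hT hθ hθ1).trans_eq <| by
          rw [Fintype.card_prod, Fintype.card_fin]
    _ ≤ _ := by
        rw [← mul_assoc]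
        gcongr

theorem large_Pprod_rare_general (s : ℕ) (C : ℝ)
    (δ : ℝ) (hδ : 0 < δ) (ε : ℝ) (hε : 0 < ε) :
    ∃ K : ℝ, 0 < K ∧ ∀ A : ℝ, 1 ≤ A →
      (Set.ncard {a : Fin s → ℤ | (∀ j, a j ≠ 0 ∧ (|a j| : ℝ) ≤ A) ∧
          A ^ δ < (Pprod s C a : ℝ)} : ℝ)
        ≤ K * A ^ ((s : ℝ) - δ + ε) := by
  set θ := min (ε / δ) 1
  have hθ : 0 < θ := lt_min (div_pos hε hδ) one_pos
  have hδθ : δ * θ ≤ ε := (mul_le_mul_of_nonneg_left (min_le_left _ _) hδ.le).trans_eq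
    (mul_div_cancel₀ ε hδ.ne')
  set Z := ∑' n : ℕ, (n : ℝ) ^ (-(1 + θ))
  have hZ : 0 < Z := (Real.summable_nat_rpow.mpr (by linarith)).tsum_pos
    (fun n => by positivity) 1 (by norm_num)
  refine ⟨2 ^ s * Z ^ (s * s) / (primorial ⌊C⌋₊ : ℝ) ^ (θ - 1), div_pos (by positivity)
    (Real.rpow_pos_of_pos (by exact_mod_cast primorial_pos _) _), fun A hA => ?_⟩
  have hA0 : 0 < A := by linarith
  calc _ ≤ (2 * A) ^ s * (A ^ δ / primorial ⌊C⌋₊) ^ (θ - 1) * Z ^ (s * s) :=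
        ncard_large_Pprod_le s C hθ (min_le_right _ _) hA
    _ = 2 ^ s * Z ^ (s * s) / (primorial ⌊C⌋₊ : ℝ) ^ (θ - 1) * A ^ ((s : ℝ) - δ + δ * θ) := by
        rw [show (s : ℝ) - δ + δ * θ = s + δ * (θ - 1) by ring, Real.rpow_add hA0,
          Real.rpow_natCast, Real.div_rpow (by positivity) (by positivity),
          ← Real.rpow_mul hA0.le, mul_pow]
        ring
    _ ≤ _ := by gcongr

/-- The vectors `a` with `0 < |a_j| ≤ A` and `P(a) > A^δ` number `≪ A^(s-δ+ε)`. -/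
theorem large_Pprod_rare (s : ℕ) (hs : 2 ≤ s) (C : ℝ) (hC : 1 ≤ C)
    (δ : ℝ) (hδ : 0 < δ) (ε : ℝ) (hε : 0 < ε) :
    ∃ K : ℝ, 0 < K ∧ ∀ A : ℝ, 1 ≤ A →
      (Set.ncard {a : Fin s → ℤ | (∀ j, a j ≠ 0 ∧ (|a j| : ℝ) ≤ A) ∧
          A ^ δ < (Pprod s C a : ℝ)} : ℝ)
        ≤ K * A ^ ((s : ℝ) - δ + ε) :=
  large_Pprod_rare_general s C δ hδ ε hε
end

section
/- Let s ≥ 2, let C ≥ 1 and δ > 0 be real, and for a coefficient vector a ∈ (ℤ∖{0})^s let 𝒫(a) be the set of primes p such that p ≤ C or p divides at least two of a_1,…,a_s; set P(a) = ∏_{p ∈ 𝒫(a)} p and P†(a) = ∏_{p ∈ 𝒫(a)} p^(l(p)), where l(p) is the largest integer l such that p^l divides a_j for some j. Then for every ε > 0, the number of a with 0 < |a_j| ≤ A for all j, P(a) ≤ A^δ and P†(a) > A^(2δ) is ≪ A^(s−δ+ε), with implied constant depending only on s, C, δ, ε. -/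
/-- `l(p) = max{l : p^l ∣ a_j for some j}`, i.e. the largest exponent of `p` in any `a_j`. -/
noncomputable def lexp (s : ℕ) (a : Fin s → ℤ) (p : ℕ) : ℕ :=
  Finset.univ.sup fun j => (a j).natAbs.factorization p

/-- `P†(a) = ∏_{p ∈ 𝒫(a)} p^(l(p))`. -/
noncomputable def Pdagger (s : ℕ) (C : ℝ) (a : Fin s → ℤ) : ℕ :=
  ∏ᶠ p ∈ Pset s C a, p ^ lexp s a p

open Finset Filter

lemma rpow_neg_lt_one_of_prime {η : ℝ} (hη : 0 < η) {p : ℕ} (hp : p.Prime) :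
    (p : ℝ) ^ (-η) < 1 :=
  Real.rpow_lt_one_of_one_lt_of_neg (by exact_mod_cast hp.one_lt) (neg_neg_of_pos hη)

noncomputable def rpowNegHom (η : ℝ) : ℕ →* ℝ where
  toFun n := (n : ℝ) ^ (-η)
  map_one' := by simp
  map_mul' m n := by push_cast; exact Real.mul_rpow m.cast_nonneg n.cast_nonneg

lemma sum_rpow_neg_le_prod_one_sub_inv {η : ℝ} (hη : 0 < η) {S F : Finset ℕ}
    (hF : ∀ n ∈ F, n ≠ 0 ∧ n.primeFactors ⊆ S) :
    ∑ n ∈ F, (n : ℝ) ^ (-η) ≤ ∏ p ∈ S with p.Prime, (1 - (p : ℝ) ^ (-η))⁻¹ := by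
  have hlt : ∀ {p : ℕ}, p.Prime → ‖rpowNegHom η p‖ < 1 := fun {p} hp => by
    simpa [rpowNegHom, abs_of_nonneg (Real.rpow_nonneg p.cast_nonneg _)]
      using rpow_neg_lt_one_of_prime hη hp
  have hsum := hasSum_subtype_iff_indicator.mp
    (EulerProduct.summable_and_hasSum_factoredNumbers_prod_filter_prime_geometric hlt S).2
  calc ∑ n ∈ F, (n : ℝ) ^ (-η)
      = ∑ n ∈ F, (Nat.factoredNumbers S).indicator (rpowNegHom η) n := by
        refine sum_congr rfl fun n hn => ?_
        rw [Set.indicator_of_mem (Nat.mem_factoredNumbers_iff_primeFactors_subset.mpr (hF n hn))]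
        rfl
    _ ≤ _ := sum_le_hasSum F (fun n _ => Set.indicator_nonneg
        (fun n _ => Real.rpow_nonneg n.cast_nonneg _) n) hsum

lemma eventually_one_sub_rpow_neg_inv_le {η θ : ℝ} (hη : 0 < η) (hθ : 0 < θ) :
    ∀ᶠ p : ℕ in atTop, (1 - (p : ℝ) ^ (-η))⁻¹ ≤ (p : ℝ) ^ θ := by
  have hsmall : ∀ᶠ p : ℕ in atTop, (p : ℝ) ^ (-η) ≤ 1 / 2 :=
    ((tendsto_rpow_neg_atTop hη).comp tendsto_natCast_atTop_atTop).eventually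
      (ge_mem_nhds (by norm_num))
  have hlarge : ∀ᶠ p : ℕ in atTop, 2 ≤ (p : ℝ) ^ θ :=
    ((tendsto_rpow_atTop hθ).comp tendsto_natCast_atTop_atTop).eventually_ge_atTop 2
  filter_upwards [hsmall, hlarge] with p hp hp'
  calc (1 - (p : ℝ) ^ (-η))⁻¹ ≤ (1 / 2)⁻¹ := inv_anti₀ (by norm_num) (by linarith)
    _ ≤ (p : ℝ) ^ θ := by norm_num [hp']

lemma one_sub_rpow_neg_inv_le_of_prime {η : ℝ} (hη : 0 < η) {p : ℕ} (hp : p.Prime) :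
    (1 - (p : ℝ) ^ (-η))⁻¹ ≤ (1 - (2 : ℝ) ^ (-η))⁻¹ := by
  have h2 := rpow_neg_lt_one_of_prime hη Nat.prime_two
  push_cast at h2
  refine inv_anti₀ (by linarith) (sub_le_sub_left ?_ 1)
  exact Real.rpow_le_rpow_of_nonpos two_pos (by exact_mod_cast hp.two_le) (by linarith)

lemma exists_prod_one_sub_rpow_neg_inv_le {η θ : ℝ} (hη : 0 < η) (hθ : 0 < θ) :
    ∃ K : ℝ, 0 < K ∧ ∀ S : Finset ℕ, (∀ p ∈ S, p.Prime) →
      ∏ p ∈ S, (1 - (p : ℝ) ^ (-η))⁻¹ ≤ K * (∏ p ∈ S, (p : ℝ)) ^ θ := by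
  obtain ⟨T, hT⟩ := (eventually_one_sub_rpow_neg_inv_le hη hθ).exists_forall_of_atTop
  set K₀ : ℝ := (1 - (2 : ℝ) ^ (-η))⁻¹
  have hK₀ : 1 ≤ K₀ := by
    have h2 := rpow_neg_lt_one_of_prime hη Nat.prime_two
    push_cast at h2
    exact (one_le_inv₀ (by linarith)).mpr (by linarith [Real.rpow_pos_of_pos two_pos (-η)])
  refine ⟨K₀ ^ T, by positivity, fun S hS => ?_⟩
  have hpoint : ∀ p ∈ S, (1 - (p : ℝ) ^ (-η))⁻¹ ≤ (if p < T then K₀ else 1) * (p : ℝ) ^ θ := by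
    intro p hp
    split_ifs with hpT
    · exact (one_sub_rpow_neg_inv_le_of_prime hη (hS p hp)).trans
        (le_mul_of_one_le_right (by positivity)
          (Real.one_le_rpow (by exact_mod_cast (hS p hp).one_lt.le) hθ.le))
    · simpa using hT p (not_lt.mp hpT)
  have hcount : #{p ∈ S | p < T} ≤ T := by
    simpa using card_le_card (s := {p ∈ S | p < T}) (t := range T) fun p hp => by simp_all
  calc ∏ p ∈ S, (1 - (p : ℝ) ^ (-η))⁻¹
      ≤ ∏ p ∈ S, (if p < T then K₀ else 1) * (p : ℝ) ^ θ :=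
        prod_le_prod (fun p hp => inv_nonneg.mpr
          (sub_nonneg.mpr (rpow_neg_lt_one_of_prime hη (hS p hp)).le)) hpoint
    _ = K₀ ^ #{p ∈ S | p < T} * (∏ p ∈ S, (p : ℝ)) ^ θ := by
        rw [prod_mul_distrib, prod_ite, prod_const, prod_const_one, mul_one,
          Real.finsetProd_rpow _ _ fun p _ => p.cast_nonneg]
    _ ≤ K₀ ^ T * (∏ p ∈ S, (p : ℝ)) ^ θ := by
        gcongr

theorem exists_card_primeFactors_subset_le {η θ : ℝ} (hη : 0 < η) (hθ : 0 < θ) :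
    ∃ K : ℝ, 0 < K ∧ ∀ N Q : ℕ, Q ≠ 0 →
      (#{n ∈ Icc 1 N | n.primeFactors ⊆ Q.primeFactors} : ℝ) ≤ K * N ^ η * Q ^ θ := by
  obtain ⟨K, hK, hprod⟩ := exists_prod_one_sub_rpow_neg_inv_le hη hθ
  refine ⟨K, hK, fun N Q hQ => ?_⟩
  set F := {n ∈ Icc 1 N | n.primeFactors ⊆ Q.primeFactors}
  have hF : ∀ n ∈ F, 1 ≤ n ∧ n ≤ N ∧ n.primeFactors ⊆ Q.primeFactors := by
    simp [F, and_assoc]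
  -- Rankin's trick: each `n ≤ N` is counted with weight `(N / n) ^ η ≥ 1`.
  have hrankin : ∀ n ∈ F, (1 : ℝ) ≤ (N : ℝ) ^ η * (n : ℝ) ^ (-η) := fun n hn => by
    obtain ⟨hn1, hnN, -⟩ := hF n hn
    have hn0 : (0 : ℝ) < n := by exact_mod_cast hn1
    rw [Real.rpow_neg hn0.le, ← div_eq_mul_inv, one_le_div (by positivity)]
    exact Real.rpow_le_rpow hn0.le (by exact_mod_cast hnN) hη.le
  have hprimes : {p ∈ Q.primeFactors | p.Prime} = Q.primeFactors :=
    filter_true_of_mem fun p hp => Nat.prime_of_mem_primeFactors hp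
  have hQprod : ∏ p ∈ Q.primeFactors, (p : ℝ) ≤ Q := by
    rw [← Nat.cast_prod]
    exact_mod_cast Nat.le_of_dvd (Nat.pos_of_ne_zero hQ) (Nat.prod_primeFactors_dvd Q)
  calc (#F : ℝ) = ∑ n ∈ F, 1 := by simp
    _ ≤ ∑ n ∈ F, (N : ℝ) ^ η * (n : ℝ) ^ (-η) := sum_le_sum hrankin
    _ = N ^ η * ∑ n ∈ F, (n : ℝ) ^ (-η) := (mul_sum ..).symm
    _ ≤ N ^ η * ∏ p ∈ Q.primeFactors, (1 - (p : ℝ) ^ (-η))⁻¹ := by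
        grw [sum_rpow_neg_le_prod_one_sub_inv hη fun n hn => ⟨by grind, (hF n hn).2.2⟩, hprimes]
    _ ≤ N ^ η * (K * Q ^ θ) := by
        grw [hprod _ fun p => Nat.prime_of_mem_primeFactors, hQprod]
    _ = K * N ^ η * Q ^ θ := by ring

lemma prod_pow_factorization_dvd (P : Finset ℕ) (n : ℕ) : ∏ p ∈ P, p ^ n.factorization p ∣ n := by
  rcases eq_or_ne n 0 with rfl | hn
  · exact dvd_zero _
  calc ∏ p ∈ P, p ^ n.factorization p = ∏ p ∈ P ∩ n.primeFactors, p ^ n.factorization p := by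
        refine (prod_subset inter_subset_left fun p hp hp' => ?_).symm
        rw [Finsupp.notMem_support_iff.mp (by simpa [hp] using hp'), pow_zero]
    _ ∣ ∏ p ∈ n.primeFactors, p ^ n.factorization p :=
        prod_dvd_prod_of_subset _ _ _ inter_subset_right
    _ = n := Nat.prod_factorization_pow_eq_self hn

lemma primeFactors_prod_pow_subset {P : Finset ℕ} (hP : ∀ p ∈ P, p.Prime) (e : ℕ → ℕ) :
    (∏ p ∈ P, p ^ e p).primeFactors ⊆ P := by
  intro q hq
  have hq' := Nat.prime_of_mem_primeFactors hq
  obtain ⟨p, hp, hqp⟩ := hq'.prime.exists_mem_finset_dvd (Nat.dvd_of_mem_primeFactors hq)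
  rwa [(Nat.prime_dvd_prime_iff_eq hq' (hP p hp)).mp (hq'.dvd_of_dvd_pow hqp)]

lemma prod_pow_sup_factorization_dvd {ι : Type*} (P : Finset ℕ) (t : Finset ι) (n : ι → ℕ) :
    ∏ p ∈ P, p ^ t.sup (fun j => (n j).factorization p) ∣
      ∏ j ∈ t, ∏ p ∈ P, p ^ (n j).factorization p := by
  rw [Finset.prod_comm]
  refine prod_dvd_prod_of_dvd _ _ fun p _ => ?_
  rw [prod_pow_eq_pow_sum]
  exact pow_dvd_pow p <| Finset.sup_le fun j hj =>
    single_le_sum (f := fun j => (n j).factorization p) (fun _ _ => Nat.zero_le _) hj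

lemma Pset_finite {s : ℕ} (C : ℝ) {a : Fin s → ℤ} (ha : ∀ j, a j ≠ 0) : (Pset s C a).Finite := by
  refine ((Set.finite_Iic ⌊C⌋₊).union
    (Set.finite_iUnion fun i => (a i).natAbs.primeFactors.finite_toSet)).subset ?_
  rintro p ⟨hp, hpC | ⟨i, -, -, hi, -⟩⟩
  · exact Or.inl (Nat.le_floor hpC)
  · exact Or.inr (Set.mem_iUnion.mpr
      ⟨i, hp.mem_primeFactors (Int.natCast_dvd.mp hi) (Int.natAbs_ne_zero.mpr (ha i))⟩)

theorem exists_smooth_divisors {s : ℕ} (C : ℝ) {a : Fin s → ℤ} (ha : ∀ j, a j ≠ 0) :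
    Pprod s C a ≠ 0 ∧ ∃ b : Fin s → ℕ,
      (∀ j, b j ∣ (a j).natAbs ∧ (b j).primeFactors ⊆ (Pprod s C a).primeFactors) ∧
      Pdagger s C a ∣ ∏ j, b j := by
  set P := (Pset_finite C ha).toFinset
  have hP : ∀ p ∈ P, p.Prime := fun p hp => ((Pset_finite C ha).mem_toFinset.mp hp).1
  have hPprod : Pprod s C a = ∏ p ∈ P, p := finprod_mem_eq_finite_toFinset_prod _ _
  refine ⟨hPprod ▸ prod_ne_zero_iff.mpr fun p hp => (hP p hp).ne_zero,
    fun j => ∏ p ∈ P, p ^ (a j).natAbs.factorization p,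
    fun j => ⟨prod_pow_factorization_dvd P _, ?_⟩, ?_⟩
  · rw [hPprod, Nat.primeFactors_prod hP]
    exact primeFactors_prod_pow_subset hP _
  · rw [Pdagger, finprod_mem_eq_finite_toFinset_prod _ (Pset_finite C ha)]
    exact prod_pow_sup_factorization_dvd P univ _

lemma card_filter_dvd_Icc_le {m M : ℕ} (hm : 0 < m) (hmM : m ≤ M) :
    (#{x ∈ Icc (-(M : ℤ)) M | (m : ℤ) ∣ x} : ℝ) ≤ 3 * M / m := by
  set q : ℤ := M / m
  have hm' : (0 : ℤ) < m := by exact_mod_cast hm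
  have hq : 1 ≤ q := (Int.le_ediv_iff_mul_le hm').mpr (by simpa using hmM)
  have hqm : q * m ≤ M := Int.ediv_mul_le _ hm'.ne'
  have hsub : {x ∈ Icc (-(M : ℤ)) M | (m : ℤ) ∣ x} ⊆ (Icc (-q) q).image (· * (m : ℤ)) := by
    intro x hx
    obtain ⟨⟨hlo, hhi⟩, k, rfl⟩ := by simpa using hx
    refine mem_image.mpr ⟨k, mem_Icc.mpr ⟨?_, (Int.le_ediv_iff_mul_le hm').mpr (by linarith)⟩,
      mul_comm _ _⟩
    rw [neg_le]
    exact (Int.le_ediv_iff_mul_le hm').mpr (by linarith)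
  have hcard : (#{x ∈ Icc (-(M : ℤ)) M | (m : ℤ) ∣ x} : ℤ) ≤ 2 * q + 1 := by
    have := (card_le_card hsub).trans card_image_le
    rw [Int.card_Icc] at this
    omega
  have hcardR : (#{x ∈ Icc (-(M : ℤ)) M | (m : ℤ) ∣ x} : ℝ) ≤ 2 * q + 1 := by exact_mod_cast hcard
  have hqR : (q : ℝ) * m ≤ M := by exact_mod_cast hqm
  have hqR1 : (1 : ℝ) ≤ q := by exact_mod_cast hq
  rw [le_div_iff₀ (by exact_mod_cast hm)]
  nlinarith

noncomputable def multiplesBox {ι : Type*} [Fintype ι] [DecidableEq ι] (M : ℕ) (b : ι → ℕ) :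
    Finset (ι → ℤ) :=
  Fintype.piFinset fun j => {x ∈ Icc (-(M : ℤ)) M | (b j : ℤ) ∣ x}

lemma card_multiplesBox_le {ι : Type*} [Fintype ι] [DecidableEq ι] {M : ℕ} {b : ι → ℕ}
    (hb : ∀ j, 0 < b j ∧ b j ≤ M) :
    (#(multiplesBox M b) : ℝ) ≤ 3 ^ Fintype.card ι * M ^ Fintype.card ι / ∏ j, (b j : ℝ) := by
  rw [multiplesBox, Fintype.card_piFinset, Nat.cast_prod, ← card_univ, ← prod_const, ← prod_const,
    ← prod_mul_distrib, ← prod_div_distrib]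
  exact prod_le_prod (fun _ _ => Nat.cast_nonneg _) fun j _ =>
    mul_div_assoc (3 : ℝ) M (b j) ▸ card_filter_dvd_Icc_le (hb j).1 (hb j).2

lemma card_biUnion_le_card_mul_of_le {ι α : Type*} [DecidableEq α] (s : Finset ι)
    (t : ι → Finset α) {c : ℝ} (h : ∀ i ∈ s, (#(t i) : ℝ) ≤ c) :
    (#(s.biUnion t) : ℝ) ≤ #s * c := by
  calc (#(s.biUnion t) : ℝ) ≤ ∑ i ∈ s, (#(t i) : ℝ) := by exact_mod_cast card_biUnion_le
    _ ≤ ∑ _i ∈ s, c := sum_le_sum h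
    _ = #s * c := by rw [sum_const, nsmul_eq_mul]

noncomputable def smoothTuples (s M Q : ℕ) (L : ℝ) : Finset (Fin s → ℕ) :=
  {b ∈ Fintype.piFinset fun _ => {n ∈ Icc 1 M | n.primeFactors ⊆ Q.primeFactors} |
    L < ∏ j, (b j : ℝ)}

lemma card_smoothTuples_le (s M Q : ℕ) (L : ℝ) :
    #(smoothTuples s M Q L) ≤ #{n ∈ Icc 1 M | n.primeFactors ⊆ Q.primeFactors} ^ s :=
  (card_filter_le _ _).trans (by simp)

lemma subset_biUnion_multiplesBox (s : ℕ) (C δ : ℝ) {A : ℝ} :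
    {a : Fin s → ℤ | (∀ j, a j ≠ 0 ∧ (|a j| : ℝ) ≤ A) ∧
        (Pprod s C a : ℝ) ≤ A ^ δ ∧ A ^ (2 * δ) < (Pdagger s C a : ℝ)} ⊆
      ↑((Icc 1 ⌊A ^ δ⌋₊).biUnion fun Q =>
        (smoothTuples s ⌊A⌋₊ Q (A ^ (2 * δ))).biUnion (multiplesBox ⌊A⌋₊)) := by
  rintro a ⟨ha, hPprod, hPdagger⟩
  obtain ⟨hQ, b, hb, hdvd⟩ := exists_smooth_divisors C fun j => (ha j).1
  have hbpos : ∀ j, 0 < b j := fun j => Nat.pos_of_dvd_of_pos (hb j).1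
    (Int.natAbs_pos.mpr (ha j).1)
  have habs : ∀ j, (a j).natAbs ≤ ⌊A⌋₊ := fun j => Nat.le_floor (by simpa using (ha j).2)
  simp only [coe_biUnion, mem_coe, mem_Icc, Set.mem_iUnion, exists_prop]
  refine ⟨Pprod s C a, ⟨Nat.pos_of_ne_zero hQ, Nat.le_floor hPprod⟩, b, ?_, ?_⟩
  · simp only [smoothTuples, mem_filter, Fintype.mem_piFinset, mem_Icc]
    refine ⟨fun j => ⟨⟨hbpos j, (Nat.le_of_dvd (Int.natAbs_pos.mpr (ha j).1) (hb j).1).trans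
      (habs j)⟩, (hb j).2⟩, hPdagger.trans_le ?_⟩
    exact_mod_cast Nat.le_of_dvd (prod_pos fun j _ => hbpos j) hdvd
  · simp only [multiplesBox, Fintype.mem_piFinset, mem_filter, mem_Icc]
    refine fun j => ⟨?_, Int.natCast_dvd.mpr (hb j).1⟩
    have := habs j
    omega

lemma exists_card_smoothTuples_le {s : ℕ} (hs : s ≠ 0) {δ ε : ℝ} (hδ : 0 < δ) (hε : 0 < ε) :
    ∃ K : ℝ, 0 < K ∧ ∀ A : ℝ, 1 ≤ A → ∀ Q ∈ Icc 1 ⌊A ^ δ⌋₊, ∀ L : ℝ,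
      (#(smoothTuples s ⌊A⌋₊ Q L) : ℝ) ≤ K * A ^ ε := by
  have hs0 : (0 : ℝ) < s := by positivity
  obtain ⟨K, hK, hcount⟩ := exists_card_primeFactors_subset_le
    (η := ε / (2 * s)) (θ := ε / (2 * s * δ)) (by positivity) (by positivity)
  refine ⟨K ^ s, by positivity, fun A hA Q hQ L => ?_⟩
  have hA0 : 0 < A := one_pos.trans_le hA
  have hQA : (Q : ℝ) ≤ A ^ δ :=
    (Nat.cast_le.mpr (mem_Icc.mp hQ).2).trans (Nat.floor_le (by positivity))
  calc (#(smoothTuples s ⌊A⌋₊ Q L) : ℝ)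
      ≤ (#{n ∈ Icc 1 ⌊A⌋₊ | n.primeFactors ⊆ Q.primeFactors} : ℝ) ^ s := by
        exact_mod_cast card_smoothTuples_le ..
    _ ≤ (K * A ^ (ε / (2 * s)) * (A ^ δ) ^ (ε / (2 * s * δ))) ^ s := by
        gcongr
        refine (hcount _ _ (by grind)).trans ?_
        gcongr
        exact Nat.floor_le hA0.le
    _ = K ^ s * A ^ ε := by
        rw [← Real.rpow_mul hA0.le, mul_assoc, ← Real.rpow_add hA0, mul_pow,
          ← Real.rpow_natCast (A ^ _) s, ← Real.rpow_mul hA0.le]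
        congr 2
        field_simp
        ring

lemma card_multiplesBox_le_rpow {s Q : ℕ} {δ A : ℝ} (hA : 0 < A) {b : Fin s → ℕ}
    (hb : b ∈ smoothTuples s ⌊A⌋₊ Q (A ^ (2 * δ))) :
    (#(multiplesBox ⌊A⌋₊ b) : ℝ) ≤ 3 ^ s * A ^ ((s : ℝ) - 2 * δ) := by
  simp only [smoothTuples, mem_filter, Fintype.mem_piFinset, mem_Icc] at hb
  calc (#(multiplesBox ⌊A⌋₊ b) : ℝ) ≤ 3 ^ s * ⌊A⌋₊ ^ s / ∏ j, (b j : ℝ) := by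
        simpa using card_multiplesBox_le fun j => (hb.1 j).1
    _ ≤ 3 ^ s * A ^ s / A ^ (2 * δ) := by
        gcongr
        exacts [Nat.floor_le hA.le, hb.2.le]
    _ = 3 ^ s * A ^ ((s : ℝ) - 2 * δ) := by
        rw [Real.rpow_sub hA, Real.rpow_natCast, mul_div_assoc]

theorem large_Pdagger_rare_general (s : ℕ) (hs : 2 ≤ s) (C : ℝ)
    (δ : ℝ) (hδ : 0 < δ) (ε : ℝ) (hε : 0 < ε) :
    ∃ K : ℝ, 0 < K ∧ ∀ A : ℝ, 1 ≤ A →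
      (Set.ncard {a : Fin s → ℤ | (∀ j, a j ≠ 0 ∧ (|a j| : ℝ) ≤ A) ∧
          (Pprod s C a : ℝ) ≤ A ^ δ ∧ A ^ (2 * δ) < (Pdagger s C a : ℝ)} : ℝ)
        ≤ K * A ^ ((s : ℝ) - δ + ε) := by
  obtain ⟨K, hK, htuples⟩ := exists_card_smoothTuples_le (by omega : s ≠ 0) hδ hε
  refine ⟨3 ^ s * K, by positivity, fun A hA => ?_⟩
  have hA0 : 0 < A := one_pos.trans_le hA
  calc _ ≤ (#((Icc 1 ⌊A ^ δ⌋₊).biUnion fun Q =>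
          (smoothTuples s ⌊A⌋₊ Q (A ^ (2 * δ))).biUnion (multiplesBox ⌊A⌋₊)) : ℝ) := by
        exact_mod_cast (Set.ncard_le_ncard (subset_biUnion_multiplesBox s C δ)
          (finite_toSet _)).trans (Set.ncard_coe_finset _).le
    _ ≤ #(Icc 1 ⌊A ^ δ⌋₊) * (K * A ^ ε * (3 ^ s * A ^ ((s : ℝ) - 2 * δ))) :=
        card_biUnion_le_card_mul_of_le _ _ fun Q hQ =>
          (card_biUnion_le_card_mul_of_le _ _ fun _ => card_multiplesBox_le_rpow hA0).trans
            (by gcongr; exact htuples A hA Q hQ _)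
    _ ≤ A ^ δ * (K * A ^ ε * (3 ^ s * A ^ ((s : ℝ) - 2 * δ))) := by
        gcongr
        simpa using Nat.floor_le (by positivity : 0 ≤ A ^ δ)
    _ = 3 ^ s * K * A ^ ((s : ℝ) - δ + ε) := by
        rw [show (s : ℝ) - δ + ε = δ + ε + ((s : ℝ) - 2 * δ) by ring, Real.rpow_add hA0,
          Real.rpow_add hA0]
        ring

/-- The vectors `a` with `0 < |a_j| ≤ A`, `P(a) ≤ A^δ` and `P†(a) > A^(2δ)` number
`≪ A^(s-δ+ε)`. -/
theorem large_Pdagger_rare (s : ℕ) (hs : 2 ≤ s) (C : ℝ) (hC : 1 ≤ C)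
    (δ : ℝ) (hδ : 0 < δ) (ε : ℝ) (hε : 0 < ε) :
    ∃ K : ℝ, 0 < K ∧ ∀ A : ℝ, 1 ≤ A →
      (Set.ncard {a : Fin s → ℤ | (∀ j, a j ≠ 0 ∧ (|a j| : ℝ) ≤ A) ∧
          (Pprod s C a : ℝ) ≤ A ^ δ ∧ A ^ (2 * δ) < (Pdagger s C a : ℝ)} : ℝ)
        ≤ K * A ^ ((s : ℝ) - δ + ε) :=
  large_Pdagger_rare_general s hs C δ hδ ε hε
end
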